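/- arXiv:1304.1887 — 3 statements merged into one kernel-verified Lean document; each statement's English description precedes it below -/
import Mathlib

section
/- Under Assumption (R), the image of a trajectory z_T^⋆ ∈ 𝒳^{T+1} under the CPF kernel P_T^N is unchanged by the choice of the ancestry realization (b_{0:T-1}^⋆, n^⋆) assigned to the frozen trajectory in the initialization: for any (i_0,…,i_T) ∈ {1,…,N}^{T+1}, sampling the remaining N−1 trajectories and ancestors from the conditional of π_T^N given (Z_t^{i_t} = [z_T^⋆]_{t+1} for all t ∈ 0:T, (B_{0:T-1}^⋆, N^⋆) = (i_0,…,i_T)) and then drawing N^⋆ from the multinomial distribution with probabilities W_T^{1:N}(z_T^{1:N}) yields the same law for the output trajectory Z_T^{N^⋆} as when (i_0,…,i_T) = (1,…,1). -/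
open MeasureTheory ProbabilityTheory Filter
open scoped ENNReal Topology

namespace ParticleGibbs

variable {𝒳 : Type*} [MeasurableSpace 𝒳]

/-- Normalised resampling weights `W_t^n`. -/
noncomputable def weight {N : ℕ} (G : 𝒳 → ℝ) (x : Fin N → 𝒳) (n : Fin N) : ℝ :=
  G (x n) / ∑ j, G (x j)

/-- Unnormalised Feynman–Kac path measure `γ_t` on `𝒳^{t+1}`. -/
noncomputable def fk (m0 : Measure 𝒳) (m : ℕ → Kernel 𝒳 𝒳) (G : ℕ → 𝒳 → ℝ) :
    (t : ℕ) → Measure (Fin (t + 1) → 𝒳)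
  | 0 => m0.map fun x => fun _ => x
  | t + 1 =>
      (fk m0 m G t).bind fun z =>
        ENNReal.ofReal (G t (z (Fin.last t))) •
          ((m (t + 1)) (z (Fin.last t))).map fun x => Fin.snoc z x

/-- The Feynman–Kac normalising constant `Z_T`. -/
noncomputable def fkZ (m0 : Measure 𝒳) (m : ℕ → Kernel 𝒳 𝒳) (G : ℕ → 𝒳 → ℝ) (T : ℕ) : ℝ≥0∞ :=
  fk m0 m G T Set.univ

/-- The normalised Feynman–Kac path measure `Q_T`. -/
noncomputable def fkQ (m0 : Measure 𝒳) (m : ℕ → Kernel 𝒳 𝒳) (G : ℕ → 𝒳 → ℝ) (T : ℕ) :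
    Measure (Fin (T + 1) → 𝒳) :=
  (fkZ m0 m G T)⁻¹ • fk m0 m G T

/-- Multinomial selection distribution on labels, with probabilities `W^n`. -/
noncomputable def select {N : ℕ} (G : 𝒳 → ℝ) (x : Fin N → 𝒳) : Measure (Fin N) :=
  ∑ n : Fin N, ENNReal.ofReal (weight G x n) • Measure.dirac n

/-- Multinomial resampling distribution: the ancestors are i.i.d. draws from `select`. -/
noncomputable def multinomialR {N : ℕ} (G : 𝒳 → ℝ) (x : Fin N → 𝒳) :
    Measure (Fin N → Fin N) :=
  Measure.pi fun _ : Fin N => select G x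

/-- The law `θ_T^N` of the interacting particle system (states and ancestor variables). -/
noncomputable def particleLaw (N : ℕ) (m0 : Measure 𝒳) (m : ℕ → Kernel 𝒳 𝒳)
    (R : ℕ → (Fin N → 𝒳) → Measure (Fin N → Fin N)) :
    (t : ℕ) → Measure ((Fin (t + 1) → Fin N → 𝒳) × (Fin t → Fin N → Fin N))
  | 0 => (Measure.pi fun _ : Fin N => m0).map fun x0 => (fun _ => x0, fun i => i.elim0)
  | t + 1 =>
      (particleLaw N m0 m R t).bind fun p =>
        (R t (p.1 (Fin.last t))).bind fun a =>
          (Measure.pi fun n : Fin N => (m (t + 1)) (p.1 (Fin.last t) (a n))).map fun xnew =>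
            (Fin.snoc p.1 xnew, Fin.snoc p.2 a)

/-- Auxiliary backward recursion for ancestral lineages: `ancAux T a n k = B_{T-k}`
where `B_T = n` and `B_t = a_t (B_{t+1})`. -/
def ancAux {N : ℕ} (T : ℕ) (a : Fin T → Fin N → Fin N) (n : Fin N) : ℕ → Fin N
  | 0 => n
  | k + 1 => if h : T - (k + 1) < T then a ⟨T - (k + 1), h⟩ (ancAux T a n k) else n

/-- The ancestral lineage `B` of the particle with final label `n`. -/
def lineage {N T : ℕ} (a : Fin T → Fin N → Fin N) (n : Fin N) : Fin (T + 1) → Fin N :=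
  fun t => ancAux T a n (T - (t : ℕ))

/-- The trajectory `Z_T^n` of the particle with final label `n`. -/
def traj {N T : ℕ} (x : Fin (T + 1) → Fin N → 𝒳) (a : Fin T → Fin N → Fin N) (n : Fin N) :
    Fin (T + 1) → 𝒳 :=
  fun t => x t (lineage a n t)

/-- The extended target distribution `π_T^N` on particles, ancestors and the selected index. -/
noncomputable def piTN (N : ℕ) (m0 : Measure 𝒳) (m : ℕ → Kernel 𝒳 𝒳) (G : ℕ → 𝒳 → ℝ)
    (R : ℕ → (Fin N → 𝒳) → Measure (Fin N → Fin N)) (T : ℕ) :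
    Measure (((Fin (T + 1) → Fin N → 𝒳) × (Fin T → Fin N → Fin N)) × Fin N) :=
  (fkZ m0 m G T)⁻¹ •
    ((particleLaw N m0 m R T).withDensity fun p =>
        ENNReal.ofReal (∏ t : Fin T, (N : ℝ)⁻¹ * ∑ n, G t (p.1 t.castSucc n))).bind
      fun p =>
        (∑ n : Fin N, ENNReal.ofReal ((N : ℝ)⁻¹ * G T (p.1 (Fin.last T) n)) •
            Measure.dirac n).map fun n => (p, n)

/-- The conditional distribution of the whole ancestor vector given `A^n = m`. -/
noncomputable def condAncestor {N : ℕ} (R : Measure (Fin N → Fin N)) (n m : Fin N) :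
    Measure (Fin N → Fin N) :=
  (R {a | a n = m})⁻¹ • R.restrict {a | a n = m}

/-- CPF step 1: the law of the conditional particle system, where at each time `t` the
particle labelled `i t` is frozen at `z t` and the ancestor constraint `A_t^{i(t+1)} = i t`
holds. -/
noncomputable def cpfSystem (N : ℕ) (m0 : Measure 𝒳) (m : ℕ → Kernel 𝒳 𝒳)
    (R : ℕ → (Fin N → 𝒳) → Measure (Fin N → Fin N)) (z : ℕ → 𝒳) (i : ℕ → Fin N) :
    (t : ℕ) → Measure ((Fin (t + 1) → Fin N → 𝒳) × (Fin t → Fin N → Fin N))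
  | 0 => (Measure.pi fun n : Fin N => if n = i 0 then Measure.dirac (z 0) else m0).map
      fun x0 => (fun _ => x0, fun j => j.elim0)
  | t + 1 =>
      (cpfSystem N m0 m R z i t).bind fun p =>
        (condAncestor (R t (p.1 (Fin.last t))) (i (t + 1)) (i t)).bind fun a =>
          (Measure.pi fun n : Fin N =>
              if n = i (t + 1) then Measure.dirac (z (t + 1))
              else (m (t + 1)) (p.1 (Fin.last t) (a n))).map fun xnew =>
            (Fin.snoc p.1 xnew, Fin.snoc p.2 a)

def extendPath {T : ℕ} (z : Fin (T + 1) → 𝒳) : ℕ → 𝒳 :=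
  fun t => z ⟨min t T, Nat.lt_succ_of_le (Nat.min_le_right t T)⟩

def extendIdx {N T : ℕ} (i : Fin (T + 1) → Fin N) : ℕ → Fin N :=
  fun t => i ⟨min t T, Nat.lt_succ_of_le (Nat.min_le_right t T)⟩

/-- The CPF kernel with a general assignment `i` of the frozen ancestry. -/
noncomputable def cpfKernelAux (N : ℕ) (m0 : Measure 𝒳) (m : ℕ → Kernel 𝒳 𝒳)
    (G : ℕ → 𝒳 → ℝ) (R : ℕ → (Fin N → 𝒳) → Measure (Fin N → Fin N)) (T : ℕ)
    (z : ℕ → 𝒳) (i : ℕ → Fin N) : Measure (Fin (T + 1) → 𝒳) :=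
  (cpfSystem N m0 m R z i T).bind fun p =>
    (select (G T) (p.1 (Fin.last T))).bind fun n => Measure.dirac (traj p.1 p.2 n)

/-- The CPF (conditional particle filter / Particle Gibbs) Markov kernel `P_T^N`. -/
noncomputable def cpfKernel (N : ℕ) (m0 : Measure 𝒳) (m : ℕ → Kernel 𝒳 𝒳)
    (G : ℕ → 𝒳 → ℝ) (R : ℕ → (Fin N → 𝒳) → Measure (Fin N → Fin N)) (T : ℕ)
    (z : Fin (T + 1) → 𝒳) : Measure (Fin (T + 1) → 𝒳) :=
  if hN : 0 < N then cpfKernelAux N m0 m G R T (extendPath z) fun _ => (⟨0, hN⟩ : Fin N)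
  else 0

/-- Conditional probability that `A^b = v` given the other components `A^{-b} = a^{-b}`,
relative to a resampling distribution `R`. -/
noncomputable def condPMF {N : ℕ} (R : Measure (Fin N → Fin N)) (b : Fin N)
    (a : Fin N → Fin N) (v : Fin N) : ℝ≥0∞ :=
  R {Function.update a b v} / R {a' | ∀ j, j ≠ b → a' j = a j}

/-- Unnormalised backward-sampling weight of value `v` for `B_t`, given `B_{t+1} = b`. -/
noncomputable def bsWeight {N T : ℕ} (R : ℕ → (Fin N → 𝒳) → Measure (Fin N → Fin N))
    (dens : ℕ → 𝒳 → 𝒳 → ℝ) (x : Fin (T + 1) → Fin N → 𝒳) (a : Fin T → Fin N → Fin N)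
    (t : Fin T) (b v : Fin N) : ℝ≥0∞ :=
  condPMF (R t (x t.castSucc)) b (a t) v *
    ENNReal.ofReal (dens ((t : ℕ) + 1) (x t.castSucc v) (x t.succ b))

/-- One backward-sampling update, redrawing `B_t` given `B_{t+1}`. -/
noncomputable def bsStep {N T : ℕ} (R : ℕ → (Fin N → 𝒳) → Measure (Fin N → Fin N))
    (dens : ℕ → 𝒳 → 𝒳 → ℝ) (x : Fin (T + 1) → Fin N → 𝒳) (a : Fin T → Fin N → Fin N)
    (t : Fin T) (B : Fin (T + 1) → Fin N) : Measure (Fin (T + 1) → Fin N) :=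
  ∑ v : Fin N,
    (bsWeight R dens x a t (B t.succ) v /
        ∑ u : Fin N, bsWeight R dens x a t (B t.succ) u) •
      Measure.dirac (Function.update B t.castSucc v)

/-- The law of the backward-sampled lineage (step CPF-3), started from `B_T = nstar`. -/
noncomputable def bsLaw {N T : ℕ} (R : ℕ → (Fin N → 𝒳) → Measure (Fin N → Fin N))
    (dens : ℕ → 𝒳 → 𝒳 → ℝ) (x : Fin (T + 1) → Fin N → 𝒳) (a : Fin T → Fin N → Fin N)
    (nstar : Fin N) : Measure (Fin (T + 1) → Fin N) :=
  ((List.finRange T).reverse).foldl (fun μ t => μ.bind (bsStep R dens x a t))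
    (Measure.dirac fun _ => nstar)

/-- The CPF-BS kernel with general frozen-ancestry assignment `i`. -/
noncomputable def cpfBSKernelAux (N : ℕ) (m0 : Measure 𝒳) (m : ℕ → Kernel 𝒳 𝒳)
    (G : ℕ → 𝒳 → ℝ) (R : ℕ → (Fin N → 𝒳) → Measure (Fin N → Fin N))
    (dens : ℕ → 𝒳 → 𝒳 → ℝ) (T : ℕ) (z : ℕ → 𝒳) (i : ℕ → Fin N) :
    Measure (Fin (T + 1) → 𝒳) :=
  (cpfSystem N m0 m R z i T).bind fun p =>
    (select (G T) (p.1 (Fin.last T))).bind fun n =>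
      (bsLaw R dens p.1 p.2 n).bind fun B => Measure.dirac fun t => p.1 t (B t)

/-- The CPF-BS (conditional particle filter with backward sampling) kernel `P_T^{N,B}`. -/
noncomputable def cpfBSKernel (N : ℕ) (m0 : Measure 𝒳) (m : ℕ → Kernel 𝒳 𝒳)
    (G : ℕ → 𝒳 → ℝ) (R : ℕ → (Fin N → 𝒳) → Measure (Fin N → Fin N))
    (dens : ℕ → 𝒳 → 𝒳 → ℝ) (T : ℕ) (z : Fin (T + 1) → 𝒳) :
    Measure (Fin (T + 1) → 𝒳) :=
  if hN : 0 < N then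
    cpfBSKernelAux N m0 m G R dens T (extendPath z) fun _ => (⟨0, hN⟩ : Fin N)
  else 0

/-- Partial backward sampling: update at times in `J`, deterministic tracing elsewhere. -/
noncomputable def bsStepJ {N T : ℕ} (J : Finset (Fin T))
    (R : ℕ → (Fin N → 𝒳) → Measure (Fin N → Fin N)) (dens : ℕ → 𝒳 → 𝒳 → ℝ)
    (x : Fin (T + 1) → Fin N → 𝒳) (a : Fin T → Fin N → Fin N) (t : Fin T)
    (B : Fin (T + 1) → Fin N) : Measure (Fin (T + 1) → Fin N) :=
  if t ∈ J then bsStep R dens x a t B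
  else Measure.dirac (Function.update B t.castSucc (a t (B t.succ)))

noncomputable def bsLawJ {N T : ℕ} (J : Finset (Fin T))
    (R : ℕ → (Fin N → 𝒳) → Measure (Fin N → Fin N)) (dens : ℕ → 𝒳 → 𝒳 → ℝ)
    (x : Fin (T + 1) → Fin N → 𝒳) (a : Fin T → Fin N → Fin N) (nstar : Fin N) :
    Measure (Fin (T + 1) → Fin N) :=
  ((List.finRange T).reverse).foldl (fun μ t => μ.bind (bsStepJ J R dens x a t))
    (Measure.dirac fun _ => nstar)

/-- The CPF kernel regarded as a Markov kernel on the extended space of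
trajectories together with their ancestral lineage `(z_T^⋆, b_{0:T-1}^⋆, n^⋆)`. -/
noncomputable def extCPF (N : ℕ) (m0 : Measure 𝒳) (m : ℕ → Kernel 𝒳 𝒳)
    (G : ℕ → 𝒳 → ℝ) (R : ℕ → (Fin N → 𝒳) → Measure (Fin N → Fin N)) (T : ℕ)
    (s : (Fin (T + 1) → 𝒳) × (Fin (T + 1) → Fin N)) :
    Measure ((Fin (T + 1) → 𝒳) × (Fin (T + 1) → Fin N)) :=
  (cpfSystem N m0 m R (extendPath s.1) (extendIdx s.2) T).bind fun p =>
    (select (G T) (p.1 (Fin.last T))).bind fun n =>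
      Measure.dirac (traj p.1 p.2 n, lineage p.2 n)

/-- The CPF-BS(J) kernel (partial backward sampling) on the extended space. -/
noncomputable def extBSJ (N : ℕ) (m0 : Measure 𝒳) (m : ℕ → Kernel 𝒳 𝒳)
    (G : ℕ → 𝒳 → ℝ) (R : ℕ → (Fin N → 𝒳) → Measure (Fin N → Fin N))
    (dens : ℕ → 𝒳 → 𝒳 → ℝ) (T : ℕ) (J : Finset (Fin T))
    (s : (Fin (T + 1) → 𝒳) × (Fin (T + 1) → Fin N)) :
    Measure ((Fin (T + 1) → 𝒳) × (Fin (T + 1) → Fin N)) :=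
  (cpfSystem N m0 m R (extendPath s.1) (extendIdx s.2) T).bind fun p =>
    (select (G T) (p.1 (Fin.last T))).bind fun n =>
      (bsLawJ J R dens p.1 p.2 n).bind fun B =>
        Measure.dirac ((fun t => p.1 t (B t)), B)

/-- The CPF-BS kernel on the extended space. -/
noncomputable def extBS (N : ℕ) (m0 : Measure 𝒳) (m : ℕ → Kernel 𝒳 𝒳)
    (G : ℕ → 𝒳 → ℝ) (R : ℕ → (Fin N → 𝒳) → Measure (Fin N → Fin N))
    (dens : ℕ → 𝒳 → 𝒳 → ℝ) (T : ℕ)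
    (s : (Fin (T + 1) → 𝒳) × (Fin (T + 1) → Fin N)) :
    Measure ((Fin (T + 1) → 𝒳) × (Fin (T + 1) → Fin N)) :=
  extBSJ N m0 m G R dens T Finset.univ s

/-- Uniform distribution on a finite type. -/
noncomputable def uniformFin (α : Type*) [Fintype α] [MeasurableSpace α] : Measure α :=
  (Fintype.card α : ℝ≥0∞)⁻¹ • Measure.count

/-- The stationary law of `(Z_T^⋆, B_{0:T-1}^⋆, N^⋆)`, namely `Q_T ⊗ Uniform`. -/
noncomputable def extTarget (N : ℕ) (m0 : Measure 𝒳) (m : ℕ → Kernel 𝒳 𝒳)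
    (G : ℕ → 𝒳 → ℝ) (T : ℕ) :
    Measure ((Fin (T + 1) → 𝒳) × (Fin (T + 1) → Fin N)) :=
  (fkQ m0 m G T).prod (uniformFin (Fin (T + 1) → Fin N))

/-- `k`-fold iterate of a (measure-valued) Markov kernel. -/
noncomputable def iterateKernel {α : Type*} [MeasurableSpace α] (P : α → Measure α) :
    ℕ → α → Measure α
  | 0, x => Measure.dirac x
  | k + 1, x => (P x).bind (iterateKernel P k)

/-- The law of `(ξ_0, …, ξ_n)` for a Markov chain with initial law `μ` and kernel `P`. -/
noncomputable def chainLaw {α : Type*} [MeasurableSpace α] (μ : Measure α)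
    (P : α → Measure α) : (n : ℕ) → Measure (Fin (n + 1) → α)
  | 0 => μ.map fun z => fun _ => z
  | n + 1 => (chainLaw μ P n).bind fun ξ => (P (ξ (Fin.last n))).map fun z => Fin.snoc ξ z

/-- Forced-move selection probabilities (metropolised Gibbs step on `N^⋆`). -/
noncomputable def fmProb {N : ℕ} (w : Fin N → ℝ) (i0 n : Fin N) : ℝ :=
  if n = i0 then
    1 - ∑ j ∈ Finset.univ.erase i0, w j / (1 - w i0) * min ((1 - w i0) / (1 - w j)) 1
  else w n / (1 - w i0) * min ((1 - w i0) / (1 - w n)) 1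

noncomputable def fmSelect {N : ℕ} (G : 𝒳 → ℝ) (x : Fin N → 𝒳) (i0 : Fin N) :
    Measure (Fin N) :=
  ∑ n : Fin N, ENNReal.ofReal (fmProb (weight G x) i0 n) • Measure.dirac n

/-- The forced-move CPF kernel. -/
noncomputable def fmKernel (N : ℕ) (m0 : Measure 𝒳) (m : ℕ → Kernel 𝒳 𝒳)
    (G : ℕ → 𝒳 → ℝ) (R : ℕ → (Fin N → 𝒳) → Measure (Fin N → Fin N)) (T : ℕ)
    (z : Fin (T + 1) → 𝒳) : Measure (Fin (T + 1) → 𝒳) :=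
  if hN : 0 < N then
    (cpfSystem N m0 m R (extendPath z) (fun _ => (⟨0, hN⟩ : Fin N)) T).bind fun p =>
      (fmSelect (G T) (p.1 (Fin.last T)) ⟨0, hN⟩).bind fun n =>
        Measure.dirac (traj p.1 p.2 n)
  else 0

end ParticleGibbs

namespace ParticleGibbs

variable {𝒳 : Type*} [MeasurableSpace 𝒳]

/-- One step of the coupling of two conditional particle systems.  The state of each
particle is `(Z, Ž, coupled-flag)`; `xf`, `xcf` are the frozen values at the new time. -/
noncomputable def coupleStep (N : ℕ) (m : Kernel 𝒳 𝒳) (G : 𝒳 → ℝ) (xf xcf : 𝒳)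
    (s : Fin N → 𝒳 × 𝒳 × Bool) : Measure (Fin N → 𝒳 × 𝒳 × Bool) :=
  let xiC : ℝ := ∑ j, if (s j).2.2 then G (s j).1 else 0
  let xiCc : ℝ := ∑ j, if (s j).2.2 then 0 else G (s j).1
  let xiCcChk : ℝ := ∑ j, if (s j).2.2 then 0 else G (s j).2.1
  let lam : ℝ := xiC / (xiC + xiCc)
  let lamChk : ℝ := xiC / (xiC + xiCcChk)
  let mu : Measure 𝒳 :=
    ∑ j, (if (s j).2.2 then ENNReal.ofReal (G (s j).1 / xiC) else 0) • m (s j).1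
  let muC : Measure 𝒳 :=
    ∑ j, (if (s j).2.2 then 0 else ENNReal.ofReal (G (s j).1 / xiCc)) • m (s j).1
  let muCChk : Measure 𝒳 :=
    ∑ j, (if (s j).2.2 then 0 else ENNReal.ofReal (G (s j).2.1 / xiCcChk)) • m (s j).2.1
  let nu : Measure 𝒳 :=
    ENNReal.ofReal (|lam - lamChk| / (1 - min lam lamChk)) • mu +
      ENNReal.ofReal ((1 - max lam lamChk) / (1 - min lam lamChk)) • muC
  let nuChk : Measure 𝒳 :=
    ENNReal.ofReal (|lam - lamChk| / (1 - min lam lamChk)) • mu +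
      ENNReal.ofReal ((1 - max lam lamChk) / (1 - min lam lamChk)) • muCChk
  let kap : Measure (𝒳 × 𝒳) := if lam ≤ lamChk then muC.prod nuChk else nu.prod muCChk
  let pair : Measure (𝒳 × 𝒳 × Bool) :=
    ENNReal.ofReal (min lam lamChk) • mu.map (fun y => (y, y, true)) +
      (1 - ENNReal.ofReal (min lam lamChk)) • kap.map (fun q => (q.1, q.2, false))
  Measure.pi fun n : Fin N => if (n : ℕ) = 0 then Measure.dirac (xf, xcf, false) else pair

/-- The law of the coupled pair of conditional particle systems with frozen trajectories
`x` and `xc` (each relabelled as particle `0` of its system). -/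
noncomputable def coupledLaw (N : ℕ) (m0 : Measure 𝒳) (m : ℕ → Kernel 𝒳 𝒳)
    (G : ℕ → 𝒳 → ℝ) (x xc : ℕ → 𝒳) :
    (t : ℕ) → Measure (Fin (t + 1) → Fin N → 𝒳 × 𝒳 × Bool)
  | 0 => (Measure.pi fun n : Fin N =>
        if (n : ℕ) = 0 then Measure.dirac (x 0, xc 0, false)
        else m0.map fun y => (y, y, true)).map fun s0 => fun _ => s0
  | t + 1 => (coupledLaw N m0 m G x xc t).bind fun s =>
      (coupleStep N (m (t + 1)) (G t) (x (t + 1)) (xc (t + 1)) (s (Fin.last t))).map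
        fun snew => Fin.snoc s snew

/-- Number of coupled particles at time `t` of a coupled-system realisation. -/
def coupledCard {N t : ℕ} (ω : Fin (t + 1) → Fin N → 𝒳 × 𝒳 × Bool) (r : Fin (t + 1)) : ℕ :=
  (Finset.univ.filter fun n : Fin N => (ω r n).2.2 = true).card

/-! ### Residual and systematic resampling -/

/-- Integer part `⌊N W^n⌋` of the scaled weights. -/
noncomputable def floorCount (N : ℕ) (W : Fin N → ℝ) (n : Fin N) : ℕ := ⌊(N : ℝ) * W n⌋₊

/-- Residue `r^n = N W^n - ⌊N W^n⌋`. -/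
noncomputable def residue (N : ℕ) (W : Fin N → ℝ) (n : Fin N) : ℝ :=
  (N : ℝ) * W n - floorCount N W n

/-- Number of offspring of label `n` in the ancestor vector `a`. -/
def countLabel {N : ℕ} (a : Fin N → Fin N) (n : Fin N) : ℕ :=
  (Finset.univ.filter fun j => a j = n).card

/-- Number of offspring of label `n` in `a` excluding slot `b`. -/
def countLabelExcept {N : ℕ} (b : Fin N) (a : Fin N → Fin N) (n : Fin N) : ℕ :=
  ((Finset.univ.erase b).filter fun j => a j = n).card

/-- Label occupying slot `j` when stacking `c n` copies of each label `n`, sequentially. -/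
noncomputable def stackLabel (N : ℕ) (hN : 0 < N) (c : Fin N → ℕ) (j : ℕ) : Fin N :=
  if h : (Finset.univ.filter fun n : Fin N => j < ∑ i ∈ Finset.Iic n, c i).Nonempty
  then (Finset.univ.filter fun n : Fin N => j < ∑ i ∈ Finset.Iic n, c i).min' h
  else ⟨0, hN⟩

/-- Residual resampling before the random permutation: the first `∑ ⌊N W^n⌋` slots are
deterministic copies, the remaining slots are i.i.d. draws from the residual multinomial. -/
noncomputable def residualBase (N : ℕ) (W : Fin N → ℝ) : Measure (Fin N → Fin N) :=
  if hN : 0 < N then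
    Measure.pi fun j : Fin N =>
      if (j : ℕ) < ∑ n, floorCount N W n then
        Measure.dirac (stackLabel N hN (floorCount N W) (j : ℕ))
      else ∑ n : Fin N,
        ENNReal.ofReal (residue N W n / ∑ i, residue N W i) • Measure.dirac n
  else 0

/-- Residual resampling followed by a uniformly random permutation of the slots. -/
noncomputable def residualLaw (N : ℕ) (W : Fin N → ℝ) : Measure (Fin N → Fin N) :=
  (Fintype.card (Equiv.Perm (Fin N)) : ℝ≥0∞)⁻¹ •
    ∑ σ : Equiv.Perm (Fin N), (residualBase N W).map fun v => v ∘ σ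

/-- The label produced by systematic resampling for cursor position `u + n`:
the unique `m` with `S(m-1) ≤ u + n < S(m)`. -/
noncomputable def sysLabel (N : ℕ) (hN : 0 < N) (W : Fin N → ℝ) (u : ℝ) (n : Fin N) :
    Fin N :=
  if h : (Finset.univ.filter fun m : Fin N =>
      u + (n : ℝ) < (N : ℝ) * ∑ j ∈ Finset.Iic m, W j).Nonempty
  then (Finset.univ.filter fun m : Fin N =>
      u + (n : ℝ) < (N : ℝ) * ∑ j ∈ Finset.Iic m, W j).min' h
  else ⟨0, hN⟩

/-- Systematic resampling with cycle randomisation: `U ~ Uniform[0,1)`, a uniformly random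
`N`-cycle `c(n) = n + k`, and `A^n = Ā^{c(n)} = sysLabel U (n + k)`. -/
noncomputable def systematicLaw (N : ℕ) (W : Fin N → ℝ) : Measure (Fin N → Fin N) :=
  if hN : 0 < N then
    (N : ℝ≥0∞)⁻¹ • ∑ k : Fin N,
      ((volume : Measure ℝ).restrict (Set.Ico (0 : ℝ) 1)).map
        fun u => fun n : Fin N => sysLabel N hN W u (n + k)
  else 0

end ParticleGibbs


/-!
Relabel the particles at every time `s` by a cyclic shift `n ↦ n + k s`, translating the
ancestor indices accordingly. Cycle invariance (Rb) says precisely that the resampling laws are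
equivariant under such relabellings, and so is the product-form propagation step; hence the
relabelling carries the conditional particle system with frozen labels `i` to the one with frozen
labels `i - k`. The output step (pick a final label with probabilities `W_T` and trace back its
lineage) does not see the relabelling. Taking `k = i` moves every frozen label to `0`.
-/

namespace MeasureTheory.Measure

variable {α β γ : Type*} [MeasurableSpace α] [MeasurableSpace β] [MeasurableSpace γ]

lemma bind_map (μ : Measure α) {g : α → β} (hg : Measurable g) {f : β → Measure γ}
    (hf : Measurable f) : (μ.map g).bind f = μ.bind (f ∘ g) := by
  rw [Measure.bind, Measure.bind, Measure.map_map hf hg]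

lemma map_bind (μ : Measure α) {f : α → Measure β} (hf : Measurable f) {g : β → γ}
    (hg : Measurable g) : (μ.bind f).map g = μ.bind fun a => (f a).map g := by
  rw [Measure.bind, Measure.bind, ← join_map_map hg, Measure.map_map (measurable_map _ hg) hf]
  rfl

lemma bind_eq_sum [Fintype α] [MeasurableSingletonClass α] (μ : Measure α)
    (f : α → Measure β) : μ.bind f = ∑ a, μ {a} • f a := by
  ext s hs
  rw [bind_apply hs Measurable.of_discrete.aemeasurable, lintegral_fintype]
  simp [mul_comm]

lemma measurable_bind_of_fintype [Fintype β] [MeasurableSingletonClass β] {ν : α → Measure β}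
    (hν : Measurable ν) {f : α → β → Measure γ} (hf : ∀ b, Measurable fun a => f a b) :
    Measurable fun a => (ν a).bind (f a) := by
  simp_rw [bind_eq_sum]
  refine Finset.measurable_sum _ fun b _ => measurable_of_measurable_coe _ fun s hs => ?_
  simp only [smul_apply, smul_eq_mul]
  exact ((measurable_coe (measurableSet_singleton b)).comp hν).mul
    ((measurable_coe hs).comp (hf b))

lemma measurable_measure_pi {ι : Type*} [Fintype ι] {κ : ι → α → Measure β}
    (hκ : ∀ i, Measurable (κ i)) [∀ i a, IsProbabilityMeasure (κ i a)] :
    Measurable fun a => Measure.pi fun i => κ i a := by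
  refine .measure_of_isPiSystem_of_isProbabilityMeasure generateFrom_pi.symm isPiSystem_pi ?_
  rintro _ ⟨s, hs, rfl⟩
  have h a : Measure.pi (fun i => κ i a) (Set.univ.pi s) = ∏ i, κ i a (s i) := pi_pi _ _
  simp_rw [h]
  exact Finset.measurable_prod _ fun i _ =>
    (measurable_coe (hs i (Set.mem_univ i))).comp (hκ i)

lemma measurable_map_of_uncurry {κ : α → Measure β} (hκ : Measurable κ)
    [∀ a, IsProbabilityMeasure (κ a)] {g : α → β → γ} (hg : Measurable (Function.uncurry g)) :
    Measurable fun a => (κ a).map (g a) := by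
  let K : Kernel α β := ⟨κ, hκ⟩
  have : IsMarkovKernel K := ⟨inferInstance⟩
  refine measurable_of_measurable_coe _ fun s hs => ?_
  have h a : (κ a).map (g a) s = κ a (Prod.mk a ⁻¹' (Function.uncurry g ⁻¹' s)) :=
    map_apply (hg.comp measurable_prodMk_left) hs
  simp_rw [h]
  exact Kernel.measurable_kernel_prodMk_left (κ := K) (hg hs)

lemma pi_map_comp_perm {ι : Type*} [Fintype ι] (σ : Equiv.Perm ι) (μ : ι → Measure β)
    [∀ i, SigmaFinite (μ i)] :
    (Measure.pi μ).map (fun x i => x (σ i)) = Measure.pi fun i => μ (σ i) :=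
  (measurePreserving_piCongrLeft (α := fun _ => β) μ σ).symm.map_eq

end MeasureTheory.Measure

lemma measurable_finSnoc {α : Type*} [MeasurableSpace α] {n : ℕ} :
    Measurable fun q : (Fin n → α) × α => (Fin.snoc q.1 q.2 : Fin (n + 1) → α) := by
  convert (MeasurableEquiv.piFinSuccAbove (fun _ => α) (Fin.last n)).symm.measurable.comp
    measurable_swap using 1
  funext q
  simp [MeasurableEquiv.piFinSuccAbove, Fin.snocEquiv]

namespace ProbabilityTheory

variable {α β : Type*} [MeasurableSpace α] [MeasurableSpace β]

lemma cond_map (μ : Measure α) {f : α → β} (hf : Measurable f) {s : Set β}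
    (hs : MeasurableSet s) : (μ[|f ⁻¹' s]).map f = (μ.map f)[|s] := by
  rw [cond, cond, Measure.map_smul, Measure.restrict_map hf hs, Measure.map_apply hf hs]

lemma measurable_cond {μ : α → Measure β} (hμ : Measurable μ) {s : Set β}
    (hs : MeasurableSet s) : Measurable fun a => (μ a)[|s] :=
  Measure.measurable_of_measurable_coe _ fun t ht => by
    simp_rw [cond_apply hs]
    exact ((Measure.measurable_coe hs).comp hμ).inv.mul
      ((Measure.measurable_coe (hs.inter ht)).comp hμ)

end ProbabilityTheory

namespace ParticleGibbs

variable {𝒳 : Type*} {N : ℕ}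

def relabel (k : ℕ → Fin N) (t : ℕ)
    (p : (Fin (t + 1) → Fin N → 𝒳) × (Fin t → Fin N → Fin N)) :
    (Fin (t + 1) → Fin N → 𝒳) × (Fin t → Fin N → Fin N) :=
  (fun s n => p.1 s (n + k s), fun r n => p.2 r (n + k (r + 1)) - k r)

lemma ancAux_relabel [NeZero N] {T : ℕ} (a : Fin T → Fin N → Fin N) (k : ℕ → Fin N)
    (n : Fin N) :
    ∀ j ≤ T, ancAux T (fun r m => a r (m + k (r + 1)) - k r) n j
      = ancAux T a (n + k T) j - k (T - j)
  | 0, _ => by simp [ancAux]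
  | j + 1, hj => by
    have h : T - (j + 1) < T := by omega
    have h' : T - (j + 1) + 1 = T - j := by omega
    simp only [ancAux, dif_pos h, ancAux_relabel a k n j (by omega), h', sub_add_cancel]

lemma traj_relabel [NeZero N] {T : ℕ} (k : ℕ → Fin N)
    (p : (Fin (T + 1) → Fin N → 𝒳) × (Fin T → Fin N → Fin N)) (n : Fin N) :
    traj (relabel k T p).1 (relabel k T p).2 n = traj p.1 p.2 (n + k T) := by
  funext t
  simp only [traj, relabel, lineage, ancAux_relabel p.2 k n (T - t) (Nat.sub_le _ _),
    Nat.sub_sub_self t.is_le, sub_add_cancel]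

lemma weight_comp_addRight [NeZero N] (G : 𝒳 → ℝ) (x : Fin N → 𝒳) (k j : Fin N) :
    weight G (fun n => x (n + k)) j = weight G x (j + k) := by
  unfold weight
  congr 1
  exact Fintype.sum_equiv (Equiv.addRight k) _ _ fun _ => rfl

lemma select_singleton (G : 𝒳 → ℝ) (x : Fin N → 𝒳) (n : Fin N) :
    select G x {n} = ENNReal.ofReal (weight G x n) := by
  simp [select, Set.indicator]

lemma select_comp_addRight_map [NeZero N] (G : 𝒳 → ℝ) (x : Fin N → 𝒳) (k : Fin N) :
    (select G fun n => x (n + k)).map (· + k) = select G x := by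
  refine Measure.ext_of_singleton fun j => ?_
  rw [Measure.map_apply Measurable.of_discrete (measurableSet_singleton j),
    Set.preimage_add_right_singleton, select_singleton, select_singleton,
    weight_comp_addRight, neg_add_cancel_right]

structure CycleInvariant (R : (Fin N → 𝒳) → Measure (Fin N → Fin N)) : Prop where
  map_comp_addRight (x : Fin N → 𝒳) (k : Fin N) : (R x).map (fun a n => a (n + k)) = R x
  map_sub_const (x : Fin N → 𝒳) (k : Fin N) :
    (R x).map (fun a n => a n - k) = R fun n => x (n + k)

lemma CycleInvariant.map_relabel {R : (Fin N → 𝒳) → Measure (Fin N → Fin N)}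
    (hR : CycleInvariant R) (x : Fin N → 𝒳) (k' k : Fin N) :
    (R x).map (fun a n => a (n + k') - k) = R fun n => x (n + k) := by
  calc (R x).map (fun a n => a (n + k') - k)
      = ((R x).map fun a n => a (n + k')).map fun a n => a n - k := by
        rw [Measure.map_map Measurable.of_discrete Measurable.of_discrete]
        rfl
    _ = R fun n => x (n + k) := by rw [hR.map_comp_addRight, hR.map_sub_const]

lemma condAncestor_map (μ : Measure (Fin N → Fin N)) {f : (Fin N → Fin N) → Fin N → Fin N}
    {b c b' c' : Fin N} (hf : f ⁻¹' {a | a b' = c'} = {a | a b = c}) :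
    (condAncestor μ b c).map f = condAncestor (μ.map f) b' c' := by
  rw [condAncestor, condAncestor, ← hf]
  exact cond_map μ Measurable.of_discrete MeasurableSet.of_discrete

variable [MeasurableSpace 𝒳]

lemma measurable_relabel (k : ℕ → Fin N) (t : ℕ) :
    Measurable (relabel (𝒳 := 𝒳) k t) :=
  (measurable_pi_lambda _ fun s => measurable_pi_lambda _ fun _ =>
    (measurable_pi_apply _).comp ((measurable_pi_apply s).comp measurable_fst)).prodMk
    ((Measurable.of_discrete (f := fun a : Fin t → Fin N → Fin N =>
      fun r n => a r (n + k (r + 1)) - k r)).comp measurable_snd)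

lemma measurable_select {G : 𝒳 → ℝ} (hG : Measurable G) : Measurable (select (N := N) G) :=
  Finset.measurable_sum _ fun n _ => Measurable.smul_measure (ENNReal.measurable_ofReal.comp
    ((hG.comp (measurable_pi_apply n)).div (Finset.measurable_sum _ fun j _ =>
      hG.comp (measurable_pi_apply j)))) _

lemma measurable_traj {T : ℕ} (n : Fin N) :
    Measurable fun p : (Fin (T + 1) → Fin N → 𝒳) × (Fin T → Fin N → Fin N) =>
      traj p.1 p.2 n :=
  measurable_from_prod_countable_left fun a => measurable_pi_lambda _ fun t =>
    (measurable_pi_apply (lineage a n t)).comp (measurable_pi_apply t)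

noncomputable def cpfOutput (G : 𝒳 → ℝ) (T : ℕ)
    (p : (Fin (T + 1) → Fin N → 𝒳) × (Fin T → Fin N → Fin N)) : Measure (Fin (T + 1) → 𝒳) :=
  (select G (p.1 (Fin.last T))).bind fun n => Measure.dirac (traj p.1 p.2 n)

lemma measurable_cpfOutput {G : 𝒳 → ℝ} (hG : Measurable G) (T : ℕ) :
    Measurable (cpfOutput (N := N) G T) :=
  Measure.measurable_bind_of_fintype
    ((measurable_select hG).comp ((measurable_pi_apply _).comp measurable_fst))
    fun n => Measure.measurable_dirac.comp (measurable_traj n)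

lemma cpfOutput_relabel [NeZero N] (G : 𝒳 → ℝ) {T : ℕ} (k : ℕ → Fin N)
    (p : (Fin (T + 1) → Fin N → 𝒳) × (Fin T → Fin N → Fin N)) :
    cpfOutput G T (relabel k T p) = cpfOutput G T p := by
  unfold cpfOutput
  simp_rw [traj_relabel]
  rw [← select_comp_addRight_map G (p.1 (Fin.last T)) (k T),
    Measure.bind_map _ Measurable.of_discrete Measurable.of_discrete]
  rfl

noncomputable def propagate (m : Kernel 𝒳 𝒳) (xf : 𝒳) (b : Fin N) {t : ℕ}
    (p : (Fin (t + 1) → Fin N → 𝒳) × (Fin t → Fin N → Fin N)) (a : Fin N → Fin N) :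
    Measure ((Fin (t + 2) → Fin N → 𝒳) × (Fin (t + 1) → Fin N → Fin N)) :=
  (Measure.pi fun n => if n = b then Measure.dirac xf else m (p.1 (Fin.last t) (a n))).map
    fun xnew => (Fin.snoc p.1 xnew, Fin.snoc p.2 a)

noncomputable def cpfStep (m : Kernel 𝒳 𝒳) (R : (Fin N → 𝒳) → Measure (Fin N → Fin N))
    (xf : 𝒳) (b c : Fin N) (t : ℕ) (p : (Fin (t + 1) → Fin N → 𝒳) × (Fin t → Fin N → Fin N)) :
    Measure ((Fin (t + 2) → Fin N → 𝒳) × (Fin (t + 1) → Fin N → Fin N)) :=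
  (condAncestor (R (p.1 (Fin.last t))) b c).bind (propagate m xf b p)

lemma cpfSystem_succ (m0 : Measure 𝒳) (m : ℕ → Kernel 𝒳 𝒳)
    (R : ℕ → (Fin N → 𝒳) → Measure (Fin N → Fin N)) (z : ℕ → 𝒳) (i : ℕ → Fin N) (t : ℕ) :
    cpfSystem N m0 m R z i (t + 1) = (cpfSystem N m0 m R z i t).bind
      (cpfStep (m (t + 1)) (R t) (z (t + 1)) (i (t + 1)) (i t) t) :=
  rfl

lemma measurable_propagate (m : Kernel 𝒳 𝒳) [IsMarkovKernel m] (xf : 𝒳) (b : Fin N) (t : ℕ)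
    (a : Fin N → Fin N) :
    Measurable fun p : (Fin (t + 1) → Fin N → 𝒳) × (Fin t → Fin N → Fin N) =>
      propagate m xf b p a := by
  refine Measure.measurable_map_of_uncurry (Measure.measurable_measure_pi fun n => ?_) ?_
  · split_ifs
    · exact measurable_const
    · exact m.measurable.comp
        ((measurable_pi_apply _).comp ((measurable_pi_apply _).comp measurable_fst))
  · exact (measurable_finSnoc.comp
      ((measurable_fst.comp measurable_fst).prodMk measurable_snd)).prodMk
      ((Measurable.of_discrete (f := fun anc : Fin t → Fin N → Fin N =>
        (Fin.snoc anc a : Fin (t + 1) → Fin N → Fin N))).comp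
        (measurable_snd.comp measurable_fst))

lemma measurable_cpfStep (m : Kernel 𝒳 𝒳) [IsMarkovKernel m]
    {R : (Fin N → 𝒳) → Measure (Fin N → Fin N)} (hR : Measurable R) (xf : 𝒳) (b c : Fin N)
    (t : ℕ) : Measurable (cpfStep m R xf b c t) :=
  Measure.measurable_bind_of_fintype
    ((measurable_cond hR MeasurableSet.of_discrete).comp
      ((measurable_pi_apply _).comp measurable_fst))
    (measurable_propagate m xf b t)

lemma propagate_relabel [NeZero N] (m : Kernel 𝒳 𝒳) [IsMarkovKernel m] (xf : 𝒳) (b : Fin N)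
    (k : ℕ → Fin N) {t : ℕ} (p : (Fin (t + 1) → Fin N → 𝒳) × (Fin t → Fin N → Fin N))
    (a : Fin N → Fin N) :
    (propagate m xf b p a).map (relabel k (t + 1)) =
      propagate m xf (b - k (t + 1)) (relabel k t p) fun n => a (n + k (t + 1)) - k t := by
  have hsnoc : relabel k (t + 1) ∘ (fun xnew => (Fin.snoc p.1 xnew, Fin.snoc p.2 a)) =
      (fun xnew => (Fin.snoc (relabel k t p).1 xnew,
        Fin.snoc (relabel k t p).2 fun n => a (n + k (t + 1)) - k t)) ∘
      fun xnew n => xnew (n + k (t + 1)) := by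
    funext xnew
    refine Prod.ext (funext fun s => funext fun n => ?_) (funext fun r => funext fun n => ?_)
    · induction s using Fin.lastCases <;> simp [relabel]
    · induction r using Fin.lastCases <;> simp [relabel]
  have hsnoc_meas (x : Fin (t + 1) → Fin N → 𝒳) (anc : Fin (t + 1) → Fin N → Fin N) :
      Measurable fun xnew => ((Fin.snoc x xnew : Fin (t + 2) → Fin N → 𝒳), anc) :=
    (measurable_finSnoc.comp (measurable_const.prodMk measurable_id)).prodMk measurable_const
  unfold propagate
  rw [Measure.map_map (measurable_relabel k _) (hsnoc_meas _ _), hsnoc,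
    ← Measure.map_map (hsnoc_meas _ _) (by fun_prop)]
  refine congrArg _ ((Measure.pi_map_comp_perm (Equiv.addRight (k (t + 1))) _).trans
    (congrArg _ (funext fun n => ?_)))
  simp only [Equiv.coe_addRight, ← eq_sub_iff_add_eq]
  split_ifs <;> simp [relabel]

lemma cpfStep_relabel [NeZero N] (m : Kernel 𝒳 𝒳) [IsMarkovKernel m]
    {R : (Fin N → 𝒳) → Measure (Fin N → Fin N)} (hR : CycleInvariant R) (xf : 𝒳) (b c : Fin N)
    (k : ℕ → Fin N) {t : ℕ} (p : (Fin (t + 1) → Fin N → 𝒳) × (Fin t → Fin N → Fin N)) :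
    (cpfStep m R xf b c t p).map (relabel k (t + 1)) =
      cpfStep m R xf (b - k (t + 1)) (c - k t) t (relabel k t p) := by
  have hpre : (fun a n => a (n + k (t + 1)) - k t) ⁻¹' {a | a (b - k (t + 1)) = c - k t} =
      {a : Fin N → Fin N | a b = c} := by
    ext a
    simp
  have hx : (relabel k t p).1 (Fin.last t) = fun n => p.1 (Fin.last t) (n + k t) := rfl
  unfold cpfStep
  rw [Measure.map_bind _ Measurable.of_discrete (measurable_relabel k _)]
  simp_rw [propagate_relabel]
  rw [hx, ← hR.map_relabel _ (k (t + 1)), ← condAncestor_map _ hpre,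
    Measure.bind_map _ Measurable.of_discrete Measurable.of_discrete]
  rfl

lemma cpfSystem_relabel [NeZero N] (m0 : Measure 𝒳) [IsProbabilityMeasure m0]
    (m : ℕ → Kernel 𝒳 𝒳) [∀ t, IsMarkovKernel (m t)]
    {R : ℕ → (Fin N → 𝒳) → Measure (Fin N → Fin N)} (hRmeas : ∀ t, Measurable (R t))
    (hR : ∀ t, CycleInvariant (R t)) (z : ℕ → 𝒳) (i k : ℕ → Fin N) :
    ∀ t, (cpfSystem N m0 m R z i t).map (relabel k t) =
      cpfSystem N m0 m R z (fun s => i s - k s) t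
  | 0 => by
    set init : (Fin N → 𝒳) → (Fin 1 → Fin N → 𝒳) × (Fin 0 → Fin N → Fin N) :=
      fun x0 => (fun _ => x0, fun j => j.elim0)
    have hinit : Measurable init := by fun_prop
    have hcomm : relabel k 0 ∘ init = init ∘ fun x0 n => x0 (n + k 0) := by
      funext x0
      exact Prod.ext (funext fun s => by simp [init, relabel, Fin.fin_one_eq_zero s])
        (Subsingleton.elim _ _)
    rw [cpfSystem, cpfSystem, Measure.map_map (measurable_relabel k 0) hinit, hcomm,
      ← Measure.map_map hinit (by fun_prop)]
    refine congrArg _ ((Measure.pi_map_comp_perm (Equiv.addRight (k 0)) _).trans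
      (congrArg _ (funext fun n => ?_)))
    simp only [Equiv.coe_addRight, ← eq_sub_iff_add_eq]
  | t + 1 => by
    rw [cpfSystem_succ, cpfSystem_succ,
      Measure.map_bind _ (measurable_cpfStep _ (hRmeas t) _ _ _ t) (measurable_relabel k _)]
    simp_rw [cpfStep_relabel _ (hR t)]
    rw [← cpfSystem_relabel m0 m hRmeas hR z i k t,
      Measure.bind_map _ (measurable_relabel k t) (measurable_cpfStep _ (hRmeas t) _ _ _ t)]
    rfl

end ParticleGibbs

namespace ParticleGibbs

variable {𝒳 : Type*} [MetricSpace 𝒳] [CompleteSpace 𝒳] [TopologicalSpace.SeparableSpace 𝒳]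
  [MeasurableSpace 𝒳] [BorelSpace 𝒳]

/-- Under Assumption (R), the image of a trajectory under the CPF kernel is unchanged by
the choice of the ancestry realisation `(b_{0:T-1}^⋆, n^⋆) = (i_0, …, i_T)` assigned to
the frozen trajectory: any assignment yields the same output law as `(1, …, 1)`. -/
theorem cpf_kernel_independent_of_frozen_ancestry
    (T : ℕ) (N : ℕ) (hN : 2 ≤ N)
    (m0 : Measure 𝒳) (hm0 : IsProbabilityMeasure m0)
    (m : ℕ → Kernel 𝒳 𝒳) (hm : ∀ t, IsMarkovKernel (m t))
    (G : ℕ → 𝒳 → ℝ) (hGmeas : ∀ t, Measurable (G t))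
    (R : ℕ → (Fin N → 𝒳) → Measure (Fin N → Fin N))
    (hRmeas : ∀ t (s : Set (Fin N → Fin N)), MeasurableSet s → Measurable fun x => R t x s)
    (hRb1 : ∀ t (x : Fin N → 𝒳) (k : Fin N),
      (R t x).map (fun a => fun n => a (n + k)) = R t x)
    (hRb2 : ∀ t (x : Fin N → 𝒳) (k : Fin N),
      (R t x).map (fun a => fun n => a n - k) = R t fun n => x (n + k)) :
    ∀ (z : Fin (T + 1) → 𝒳) (i : Fin (T + 1) → Fin N),
      cpfKernelAux N m0 m G R T (extendPath z) (extendIdx i) =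
        cpfKernelAux N m0 m G R T (extendPath z) fun _ => (⟨0, by omega⟩ : Fin N) := by
  have : NeZero N := ⟨by omega⟩
  intro z i
  have hrel := cpfSystem_relabel m0 m (fun t => Measure.measurable_of_measurable_coe _ (hRmeas t))
    (fun t => ⟨hRb1 t, hRb2 t⟩) (extendPath z) (extendIdx i) (extendIdx i) T
  have hzero : (fun s => extendIdx i s - extendIdx i s) = fun _ => (⟨0, by omega⟩ : Fin N) :=
    funext fun _ => (sub_self _).trans (Fin.ext rfl)
  calc cpfKernelAux N m0 m G R T (extendPath z) (extendIdx i)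
      = (cpfSystem N m0 m R (extendPath z) (extendIdx i) T).bind
          (cpfOutput (G T) T ∘ relabel (extendIdx i) T) :=
        congrArg _ (funext fun p => (cpfOutput_relabel (G T) _ p).symm)
    _ = ((cpfSystem N m0 m R (extendPath z) (extendIdx i) T).map (relabel (extendIdx i) T)).bind
          (cpfOutput (G T) T) :=
        (Measure.bind_map _ (measurable_relabel _ T) (measurable_cpfOutput (hGmeas T) T)).symm
    _ = _ := by rw [hrel, hzero]; rfl

end ParticleGibbs
end

section
/- Let W^1, …, W^N be strictly positive weights with ∑_{n=1}^N W^n = 1, and set r^n = NW^n − ⌊NW^n⌋ and R = ∑_{n=1}^N r^n, with R > 0. Consider residual resampling followed by a uniformly random permutation: stack ⌊NW^n⌋ deterministic copies of each label n (sequentially in n), append R i.i.d. draws from the multinomial distribution with probabilities r^{1:N}/R, then apply a uniformly random permutation of the N slots; call the result A^{1:N}. Then: (a) the probability mass function of A^{1:N} is P(A^{1:N} = a^{1:N}) = (R!/N!) ∏_{n=1}^N (r^n/R)^{χ^n(a) − ⌊NW^n⌋} · χ^n(a)! / (χ^n(a) − ⌊NW^n⌋)! whenever χ^n(a) ≥ ⌊NW^n⌋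 for all n (with the convention 0⁰ = 1), and 0 otherwise, where χ^n(a) = #{m : a^m = n}; and (b) this resampling distribution satisfies Assumption (R): it is marginally unbiased (P(A^m = n) = W^n for all m, n) and cycle-invariant. -/
open MeasureTheory ProbabilityTheory Filter
open scoped ENNReal Topology

namespace ParticleGibbs

variable {𝒳 : Type*} [MetricSpace 𝒳] [CompleteSpace 𝒳] [TopologicalSpace.SeparableSpace 𝒳]
  [MeasurableSpace 𝒳] [BorelSpace 𝒳]

/-!
Write `F = ∑ₙ ⌊NWⁿ⌋`. Before the permutation, the first `F` slots hold the stacked copies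
and the last `N - F` slots hold i.i.d. residual draws. Averaging over permutations,
orbit–stabiliser gives `P(A = a) = (∏ₙ χⁿ(a)! / N!) · P(Ā has label counts χ(a))` for the
stacked vector `Ā`, and `Ā` has counts `χ` iff its tail has counts `χ - ⌊NW⌋`, an event of
multinomial probability `(N - F)! ∏ₙ (rⁿ/R)^(χⁿ - ⌊NWⁿ⌋) / (χⁿ - ⌊NWⁿ⌋)!`.
Exchangeability makes all slots equally distributed, so `P(Aʲ = n)` is `1/N` times the
expected number `⌊NWⁿ⌋ + (N - F) rⁿ/R = NWⁿ` of copies of `n`. Cycle invariance is a special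
case of invariance under permutations of the slots, and relabelling the ancestors by a
permutation of the labels turns the pmf into that of the correspondingly permuted weights.
-/

section ResidualResampling

open Finset Equiv
open scoped Nat

section FiberCard

variable {ι β : Type*} [Fintype ι] [DecidableEq β]

def fiberCard (f : ι → β) (b : β) : ℕ := #{x | f x = b}

lemma fiberCard_eq_card_subtype (f : ι → β) (b : β) :
    fiberCard f b = Fintype.card {x // f x = b} :=
  (Fintype.card_subtype _).symm

lemma fiberCard_comp_perm (f : ι → β) (σ : Perm ι) : fiberCard (f ∘ σ) = fiberCard f :=
  funext fun _ => card_equiv σ (by simp)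

lemma fiberCard_perm_comp (π : Perm β) (f : ι → β) (b : β) :
    fiberCard (π ∘ f) (π b) = fiberCard f b := by
  simp [fiberCard]

lemma sum_fiberCard [Fintype β] (f : ι → β) : ∑ b, fiberCard f b = Fintype.card ι :=
  (card_eq_sum_card_fiberwise fun x _ => mem_univ (f x)).symm

lemma fiberCard_add_fiberCard_subtype (p : ι → Prop) [DecidablePred p] (f : ι → β) :
    fiberCard (fun x : {x // p x} => f x) + fiberCard (fun x : {x // ¬ p x} => f x) =
      fiberCard f := by
  funext b
  simp only [Pi.add_apply, fiberCard, card_filter]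
  exact Fintype.sum_subtype_add_sum_subtype p fun x => if f x = b then 1 else 0

lemma prod_comp_eq_prod_pow_fiberCard [Fintype β] {M : Type*} [CommMonoid M] (w : β → M)
    (g : ι → β) : ∏ x, w (g x) = ∏ b, w b ^ fiberCard g b := by
  rw [← Finset.prod_fiberwise' univ g w]
  exact prod_congr rfl fun b _ => prod_const _

lemma exists_perm_of_fiberCard_eq {f g : ι → β} (h : fiberCard g = fiberCard f) :
    ∃ σ : Perm ι, g = f ∘ σ := by
  have e : ∀ b, {x // g x = b} ≃ {x // f x = b} := fun b =>
    Fintype.equivOfCardEq (by simpa only [fiberCard_eq_card_subtype] using congrFun h b)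
  refine ⟨(sigmaFiberEquiv g).symm.trans ((sigmaCongrRight e).trans (sigmaFiberEquiv f)), ?_⟩
  funext x
  exact (e (g x) ⟨x, rfl⟩).prop.symm

variable [DecidableEq ι] [Fintype β]

lemma card_perm_comp_eq (f : ι → β) (σ₀ : Perm ι) :
    #{σ : Perm ι | f ∘ σ = f ∘ σ₀} = ∏ b, (fiberCard f b)! := by
  have hstab : #{σ : Perm ι | f ∘ σ = f} = ∏ b, (fiberCard f b)! := by
    rw [← Fintype.card_subtype, DomMulAct.stabilizer_card]
    simp only [fiberCard_eq_card_subtype]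
  rw [← hstab]
  refine card_equiv (Equiv.mulRight σ₀⁻¹) fun σ => ?_
  simp only [mem_filter, mem_univ, true_and, Equiv.coe_mulRight, Perm.coe_mul]
  exact (comp_symm_eq σ₀ f (f ∘ σ)).symm

lemma sum_comp_perm {M : Type*} [AddCommMonoid M] (F : (ι → β) → M) (f : ι → β) :
    ∑ σ : Perm ι, F (f ∘ σ) =
      (∏ b, (fiberCard f b)!) • ∑ g with fiberCard g = fiberCard f, F g := by
  have himage :
      univ.image (fun σ : Perm ι => f ∘ σ) = ({g | fiberCard g = fiberCard f} : Finset _) := by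
    ext g
    simp only [mem_image, mem_univ, true_and, mem_filter]
    constructor
    · rintro ⟨σ, rfl⟩
      exact fiberCard_comp_perm f σ
    · intro h
      obtain ⟨σ, rfl⟩ := exists_perm_of_fiberCard_eq h
      exact ⟨σ, rfl⟩
  rw [Finset.sum_comp, himage, smul_sum]
  refine sum_congr rfl fun g hg => ?_
  obtain ⟨σ₀, rfl⟩ := exists_perm_of_fiberCard_eq (mem_filter.1 hg).2
  rw [card_perm_comp_eq]

lemma card_fiberCard_eq_mul_prod_factorial (k : β → ℕ) (hk : ∑ b, k b = Fintype.card ι) :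
    #{g : ι → β | fiberCard g = k} * ∏ b, (k b)! = (Fintype.card ι)! := by
  obtain ⟨e⟩ : Nonempty (ι ≃ Σ b, Fin (k b)) := Fintype.card_eq.1 (by simp [hk])
  have hk₀ : fiberCard (fun x => (e x).1) = k := by
    funext b
    rw [fiberCard_eq_card_subtype, ← Fintype.card_fin (k b)]
    exact Fintype.card_congr (e.subtypeEquivOfSubtype.trans (Equiv.sigmaSubtype b))
  have := sum_comp_perm (fun _ => 1) (fun x => (e x).1)
  simp only [sum_const, card_univ, Fintype.card_perm, smul_eq_mul, mul_one, hk₀] at this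
  rw [this, mul_comm]

variable {R : Type*} [CommSemiring R]

lemma sum_prod_of_fiberCard_eq (w : β → R) (k : β → ℕ) :
    ∑ g : ι → β with fiberCard g = k, ∏ j, w (g j) =
      #{g : ι → β | fiberCard g = k} * ∏ b, w b ^ k b := by
  rw [sum_congr rfl fun g hg => by rw [prod_comp_eq_prod_pow_fiberCard, (mem_filter.1 hg).2],
    sum_const, nsmul_eq_mul]

lemma sum_prod_of_add_fiberCard_eq (w : β → R) (c χ : β → ℕ) :
    ∑ g : ι → β with c + fiberCard g = χ, ∏ j, w (g j) =
      if ∀ b, c b ≤ χ b then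
        #{g : ι → β | fiberCard g = χ - c} * ∏ b, w b ^ (χ b - c b)
      else 0 := by
  split_ifs with hc
  · refine Eq.trans ?_ (sum_prod_of_fiberCard_eq w (χ - c))
    refine sum_congr (filter_congr fun g _ => ?_) fun _ _ => rfl
    simp only [funext_iff, Pi.add_apply, Pi.sub_apply]
    exact forall_congr' fun b => by have := hc b; omega
  · refine sum_eq_zero fun g hg => absurd (fun b => ?_) hc
    rw [← (mem_filter.1 hg).2]
    exact Nat.le_add_right _ _

lemma sum_fiberCard_eq_prod_pinned (p : ι → Prop) [DecidablePred p] (s : ι → β)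
    (w : β → R) (χ : β → ℕ) :
    ∑ b with fiberCard b = χ, ∏ j, (if p j then (if b j = s j then 1 else 0) else w (b j)) =
      ∑ g : {j // ¬ p j} → β with fiberCard (fun j : {j // p j} => s j) + fiberCard g = χ,
        ∏ j, w (g j) := by
  set e := Equiv.piEquivPiSubtypeProd p fun _ => β
  have hsplit : ∀ b : ι → β,
      (if fiberCard b = χ then ∏ j, (if p j then (if b j = s j then 1 else 0) else w (b j))
        else 0) =
      if fiberCard (e b).1 + fiberCard (e b).2 = χ then
        (∏ j, if (e b).1 j = s j then (1 : R) else 0) * ∏ j, w ((e b).2 j) else 0 := by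
    intro b
    rw [← Fintype.prod_subtype_mul_prod_subtype p, ← fiberCard_add_fiberCard_subtype p b]
    simp only [e, Equiv.piEquivPiSubtypeProd_apply]
    congr 2
    · exact prod_congr rfl fun j _ => if_pos j.2
    · exact prod_congr rfl fun j _ => if_neg j.2
  have hpin : ∀ u : {j // p j} → β,
      (∏ j, if u j = s j then (1 : R) else 0) =
        if u = fun j : {j // p j} => s j then 1 else 0 := fun u => by
    simp only [prod_boole, funext_iff, mem_univ, true_imp_iff]
  rw [sum_filter, sum_filter, Fintype.sum_congr _ _ hsplit,
    e.sum_comp (fun x => if fiberCard x.1 + fiberCard x.2 = χ then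
        (∏ j, if x.1 j = s j then (1 : R) else 0) * ∏ j, w (x.2 j) else 0),
    Fintype.sum_prod_type, sum_comm]
  refine sum_congr rfl fun g _ => ?_
  simp only [hpin, ite_mul, one_mul, zero_mul]
  rw [Fintype.sum_eq_single (fun j : {j // p j} => s j) fun u hu => by simp [hu]]
  simp

end FiberCard

section Symmetrize

variable {ι α : Type*} [MeasurableSpace α]

lemma measurable_comp_perm (σ : Perm ι) : Measurable fun v : ι → α => v ∘ σ :=
  measurable_pi_lambda _ fun i => measurable_pi_apply (σ i)

variable [Fintype ι] [DecidableEq ι]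

noncomputable def symmetrize (μ : Measure (ι → α)) : Measure (ι → α) :=
  (Fintype.card (Perm ι) : ℝ≥0∞)⁻¹ • ∑ σ : Perm ι, μ.map fun v => v ∘ σ

lemma symmetrize_apply (μ : Measure (ι → α)) {s : Set (ι → α)} (hs : MeasurableSet s) :
    symmetrize μ s =
      ((Fintype.card ι)! : ℝ≥0∞)⁻¹ * ∑ σ : Perm ι, μ ((· ∘ σ) ⁻¹' s) := by
  simp only [symmetrize, Measure.smul_apply, Measure.coe_finsetSum, Finset.sum_apply,
    Measure.map_apply (measurable_comp_perm _) hs, Fintype.card_perm, smul_eq_mul]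

lemma map_comp_perm_symmetrize (μ : Measure (ι → α)) (τ : Perm ι) :
    (symmetrize μ).map (· ∘ τ) = symmetrize μ := by
  ext s hs
  rw [Measure.map_apply (measurable_comp_perm τ) hs, symmetrize_apply _ hs,
    symmetrize_apply _ (measurable_comp_perm τ hs)]
  congr 1
  exact Fintype.sum_equiv (Equiv.mulRight τ) _ _ fun σ => rfl

lemma symmetrize_singleton [MeasurableSingletonClass α] (μ : Measure (ι → α))
    (a : ι → α) :
    symmetrize μ {a} =
      ((Fintype.card ι)! : ℝ≥0∞)⁻¹ * ∑ σ : Perm ι, μ {a ∘ σ} := by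
  rw [symmetrize_apply _ (measurableSet_singleton a)]
  congr 1
  refine Fintype.sum_equiv (Equiv.inv _) _ _ fun σ => congrArg μ ?_
  ext v
  simp only [Set.mem_preimage, Set.mem_singleton_iff, Equiv.inv_apply]
  rw [Perm.coe_inv, Equiv.eq_comp_symm]

lemma card_mul_symmetrize_eval_preimage (μ : Measure (ι → α)) (j : ι) {t : Set α}
    (ht : MeasurableSet t) :
    Fintype.card ι * symmetrize μ {v | v j ∈ t} = ∑ i, μ {v | v i ∈ t} := by
  have hmeas : ∀ i, MeasurableSet {v : ι → α | v i ∈ t} := fun i => measurable_pi_apply i ht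
  have hslot : ∀ i, symmetrize μ {v | v i ∈ t} = symmetrize μ {v | v j ∈ t} := fun i => by
    conv_lhs => rw [← map_comp_perm_symmetrize μ (swap j i)]
    rw [Measure.map_apply (measurable_comp_perm _) (hmeas i)]
    congr 1
    ext v
    simp
  have hfact : ((Fintype.card ι)! : ℝ≥0∞) ≠ 0 := by
    exact_mod_cast (Nat.factorial_pos _).ne'
  calc (Fintype.card ι : ℝ≥0∞) * symmetrize μ {v | v j ∈ t}
      = ∑ i, symmetrize μ {v | v i ∈ t} := by
        simp only [hslot, sum_const, card_univ, nsmul_eq_mul]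
    _ = ((Fintype.card ι)! : ℝ≥0∞)⁻¹ *
          ∑ σ : Perm ι, ∑ i, μ {v | v (σ i) ∈ t} := by
        rw [sum_congr rfl fun i _ => symmetrize_apply μ (hmeas i), ← mul_sum, sum_comm]
        rfl
    _ = ∑ i, μ {v | v i ∈ t} := by
        simp only [fun σ : Perm ι => Equiv.sum_comp σ fun i => μ {v | v i ∈ t}, sum_const,
          card_univ, Fintype.card_perm, nsmul_eq_mul, ← mul_assoc]
        rw [ENNReal.inv_mul_cancel hfact (ENNReal.natCast_ne_top _), one_mul]

end Symmetrize

section StackLabel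

variable {N : ℕ}

lemma sum_Iio_le_iff_forall (c : Fin N → ℕ) (n : Fin N) (j : ℕ) :
    ∑ i ∈ Iio n, c i ≤ j ↔ ∀ m, j < ∑ i ∈ Iic m, c i → n ≤ m := by
  constructor
  · intro h m hm
    by_contra! hmn
    have : ∑ i ∈ Iic m, c i ≤ ∑ i ∈ Iio n, c i :=
      sum_le_sum_of_subset fun i hi => mem_Iio.2 ((mem_Iic.1 hi).trans_lt hmn)
    omega
  · intro h
    obtain ⟨_ | k, hn⟩ := n
    · have : Iio (⟨0, hn⟩ : Fin N) = ∅ := by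
        ext i; simp only [mem_Iio, Fin.lt_def, notMem_empty, iff_false]; omega
      simp [this]
    · have hIic : Iic (⟨k, by omega⟩ : Fin N) = Iio ⟨k + 1, hn⟩ := by
        ext i; simp only [mem_Iic, mem_Iio, Fin.le_def, Fin.lt_def]; omega
      by_contra! hlt
      rw [← hIic] at hlt
      exact absurd (h _ hlt) (by simp [Fin.le_def])

variable (hN : 0 < N)

lemma stackLabel_eq_iff (c : Fin N → ℕ) {j : ℕ} (hj : j < ∑ i, c i) (n : Fin N) :
    stackLabel N hN c j = n ↔ ∑ i ∈ Iio n, c i ≤ j ∧ j < ∑ i ∈ Iic n, c i := by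
  have hne : ({m | j < ∑ i ∈ Iic m, c i} : Finset (Fin N)).Nonempty := by
    refine ⟨⟨N - 1, by omega⟩, ?_⟩
    have : Iic (⟨N - 1, by omega⟩ : Fin N) = univ := by
      ext i; simp only [mem_Iic, Fin.le_def, mem_univ, iff_true]; omega
    simpa [this] using hj
  rw [stackLabel, dif_pos hne, min'_eq_iff, sum_Iio_le_iff_forall]
  simp only [mem_filter, mem_univ, true_and, and_comm]

lemma card_filter_stackLabel_eq (c : Fin N → ℕ) (n : Fin N) :
    #{j ∈ range (∑ i, c i) | stackLabel N hN c j = n} = c n := by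
  have hS : ∑ i ∈ Iic n, c i = c n + ∑ i ∈ Iio n, c i := by
    rw [← Iio_insert, sum_insert notMem_Iio_self]
  have hle : ∑ i ∈ Iic n, c i ≤ ∑ i, c i := sum_le_sum_of_subset (subset_univ _)
  have : {j ∈ range (∑ i, c i) | stackLabel N hN c j = n} =
      Ico (∑ i ∈ Iio n, c i) (∑ i ∈ Iic n, c i) := by
    ext j
    simp only [mem_filter, mem_range, mem_Ico]
    constructor
    · rintro ⟨hj, h⟩
      exact (stackLabel_eq_iff hN c hj n).1 h
    · rintro h
      have hj : j < ∑ i, c i := by omega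
      exact ⟨hj, (stackLabel_eq_iff hN c hj n).2 h⟩
  rw [this, Nat.card_Ico]
  omega

lemma fiberCard_stackLabel (c : Fin N → ℕ) (hc : ∑ i, c i ≤ N) :
    fiberCard (fun j : {j : Fin N // (j : ℕ) < ∑ i, c i} => stackLabel N hN c j) = c := by
  funext n
  rw [← card_filter_stackLabel_eq hN c n, fiberCard]
  refine card_nbij (fun x => ((x : Fin N) : ℕ)) (fun x hx => ?_) (fun x _ y _ h => ?_) ?_
  · simp only [coe_filter, mem_univ, true_and] at hx
    simpa [x.2] using hx
  · exact Subtype.ext (Fin.ext h)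
  · intro j hj
    simp only [coe_filter, mem_range] at hj
    exact ⟨⟨⟨j, hj.1.trans_le hc⟩, hj.1⟩, by simpa using hj.2, rfl⟩

lemma card_subtype_not_val_lt (F : ℕ) (hF : F ≤ N) :
    Fintype.card {j : Fin N // ¬ (j : ℕ) < F} = N - F := by
  rw [Fintype.card_subtype_compl, Fintype.card_subtype, Fin.card_filter_val_lt,
    Fintype.card_fin]
  omega

end StackLabel

section Residual

variable {N : ℕ} {W : Fin N → ℝ}

lemma residue_nonneg (hW : ∀ n, 0 ≤ W n) (n : Fin N) : 0 ≤ residue N W n :=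
  sub_nonneg.2 (Nat.floor_le (mul_nonneg N.cast_nonneg (hW n)))

lemma sum_residue (hWsum : ∑ n, W n = 1) :
    ∑ n, residue N W n = N - ∑ n, (floorCount N W n : ℝ) := by
  simp only [residue, sum_sub_distrib, ← mul_sum, hWsum, mul_one]

lemma sum_floorCount_le (hW : ∀ n, 0 ≤ W n) (hWsum : ∑ n, W n = 1) :
    ∑ n, floorCount N W n ≤ N := by
  have := sum_nonneg fun n (_ : n ∈ univ) => residue_nonneg hW n
  rw [sum_residue hWsum, sub_nonneg] at this
  exact_mod_cast this

lemma card_residualTail_mul_prod_factorial (hW : ∀ n, 0 ≤ W n) (hWsum : ∑ n, W n = 1)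
    (a : Fin N → Fin N) (ha : ∀ n, floorCount N W n ≤ countLabel a n) :
    #{g : {j : Fin N // ¬ (j : ℕ) < ∑ m, floorCount N W m} → Fin N |
        fiberCard g = fiberCard a - floorCount N W} *
      ∏ n, (countLabel a n - floorCount N W n)! = (N - ∑ n, floorCount N W n)! := by
  have hF := sum_floorCount_le hW hWsum
  rw [← card_subtype_not_val_lt _ hF]
  refine card_fiberCard_eq_mul_prod_factorial _ ?_
  rw [card_subtype_not_val_lt _ hF]
  exact (sum_tsub_distrib univ fun n _ => ha n).trans
    (congrArg (· - _) ((sum_fiberCard a).trans (Fintype.card_fin N)))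

noncomputable def residualDraw (N : ℕ) (W : Fin N → ℝ) : Measure (Fin N) :=
  ∑ n, ENNReal.ofReal (residue N W n / ∑ i, residue N W i) • Measure.dirac n

lemma residualDraw_singleton (n : Fin N) :
    residualDraw N W {n} = ENNReal.ofReal (residue N W n / ∑ i, residue N W i) := by
  simp [residualDraw, Measure.coe_finsetSum, Pi.single_apply]

instance : IsFiniteMeasure (residualDraw N W) := by
  constructor
  simp only [residualDraw, Measure.coe_finsetSum, Finset.sum_apply, Measure.smul_apply,
    measure_univ, smul_eq_mul, mul_one]
  exact ENNReal.sum_lt_top.2 fun _ _ => ENNReal.ofReal_lt_top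

lemma isProbabilityMeasure_residualDraw (hW : ∀ n, 0 ≤ W n) (hR : 0 < ∑ n, residue N W n) :
    IsProbabilityMeasure (residualDraw N W) := by
  constructor
  simp only [residualDraw, Measure.coe_finsetSum, Finset.sum_apply, Measure.smul_apply,
    measure_univ, smul_eq_mul, mul_one]
  rw [← ENNReal.ofReal_sum_of_nonneg fun n _ => div_nonneg (residue_nonneg hW n) hR.le,
    ← sum_div, div_self hR.ne', ENNReal.ofReal_one]

noncomputable def residualSlot (N : ℕ) (hN : 0 < N) (W : Fin N → ℝ) (j : Fin N) :
    Measure (Fin N) :=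
  if (j : ℕ) < ∑ n, floorCount N W n then Measure.dirac (stackLabel N hN (floorCount N W) j)
  else residualDraw N W

instance (hN : 0 < N) (j : Fin N) : IsFiniteMeasure (residualSlot N hN W j) := by
  unfold residualSlot
  split_ifs <;> infer_instance

lemma isProbabilityMeasure_residualSlot (hN : 0 < N) (hW : ∀ n, 0 ≤ W n)
    (hR : 0 < ∑ n, residue N W n) (j : Fin N) : IsProbabilityMeasure (residualSlot N hN W j) := by
  unfold residualSlot
  split_ifs
  · infer_instance
  · exact isProbabilityMeasure_residualDraw hW hR

lemma residualBase_eq_pi (hN : 0 < N) : residualBase N W = Measure.pi (residualSlot N hN W) := by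
  rw [residualBase, dif_pos hN]
  rfl

lemma residualLaw_eq_symmetrize : residualLaw N W = symmetrize (residualBase N W) := rfl

noncomputable def residualSlotWeight (N : ℕ) (hN : 0 < N) (W : Fin N → ℝ) (j n : Fin N) :
    ℝ :=
  if (j : ℕ) < ∑ m, floorCount N W m then
    (if n = stackLabel N hN (floorCount N W) j then 1 else 0)
  else residue N W n / ∑ i, residue N W i

lemma residualSlotWeight_nonneg (hN : 0 < N) (hW : ∀ n, 0 ≤ W n) (j n : Fin N) :
    0 ≤ residualSlotWeight N hN W j n := by
  unfold residualSlotWeight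
  split_ifs
  exacts [zero_le_one, le_rfl,
    div_nonneg (residue_nonneg hW _) (sum_nonneg fun i _ => residue_nonneg hW i)]

lemma residualSlot_singleton (hN : 0 < N) (j n : Fin N) :
    residualSlot N hN W j {n} = ENNReal.ofReal (residualSlotWeight N hN W j n) := by
  unfold residualSlot residualSlotWeight
  split_ifs <;> simp_all [residualDraw_singleton]

lemma residualBase_singleton (hN : 0 < N) (hW : ∀ n, 0 ≤ W n) (b : Fin N → Fin N) :
    residualBase N W {b} = ENNReal.ofReal (∏ j, residualSlotWeight N hN W j (b j)) := by
  rw [residualBase_eq_pi hN, ← Set.univ_pi_singleton, Measure.pi_pi,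
    ENNReal.ofReal_prod_of_nonneg fun j _ => residualSlotWeight_nonneg hN hW j (b j)]
  exact prod_congr rfl fun j _ => residualSlot_singleton hN j (b j)

lemma residualBase_eval_preimage (hN : 0 < N) (hW : ∀ n, 0 ≤ W n)
    (hR : 0 < ∑ n, residue N W n) (j n : Fin N) :
    residualBase N W {v | v j = n} = ENNReal.ofReal (residualSlotWeight N hN W j n) := by
  have := isProbabilityMeasure_residualSlot hN hW hR
  rw [residualBase_eq_pi hN, ← residualSlot_singleton hN]
  exact (measurePreserving_eval (residualSlot N hN W) j).measure_preimage
    (measurableSet_singleton n).nullMeasurableSet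

lemma sum_residualSlotWeight (hN : 0 < N) (hW : ∀ n, 0 ≤ W n) (hWsum : ∑ n, W n = 1)
    (hR : 0 < ∑ n, residue N W n) (n : Fin N) :
    ∑ j, residualSlotWeight N hN W j n = N * W n := by
  set F := ∑ m, floorCount N W m
  have hF : F ≤ N := sum_floorCount_le hW hWsum
  have hstacked : ∑ j : {j : Fin N // (j : ℕ) < F}, residualSlotWeight N hN W j n =
      floorCount N W n := by
    rw [← congrFun (fiberCard_stackLabel hN _ hF) n, fiberCard, card_filter]
    push_cast
    exact sum_congr rfl fun j _ => by
      rw [residualSlotWeight, if_pos j.2]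
      exact if_congr eq_comm rfl rfl
  have hdrawn : ∑ j : {j : Fin N // ¬ (j : ℕ) < F}, residualSlotWeight N hN W j n =
      residue N W n := by
    rw [sum_congr rfl fun j _ => by rw [residualSlotWeight, if_neg j.2], sum_const, card_univ,
      card_subtype_not_val_lt F hF, nsmul_eq_mul]
    have : ((N - F : ℕ) : ℝ) = ∑ i, residue N W i := by
      rw [sum_residue hWsum, Nat.cast_sub hF, Nat.cast_sum]
    rw [this]
    field_simp
  rw [← Fintype.sum_subtype_add_sum_subtype (fun j : Fin N => (j : ℕ) < F), hstacked, hdrawn,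
    residue]
  ring

noncomputable def residualPMF (N : ℕ) (W : Fin N → ℝ) (a : Fin N → Fin N) : ℝ≥0∞ :=
  if ∀ n, floorCount N W n ≤ countLabel a n then
    ENNReal.ofReal
      (((Nat.factorial (N - ∑ n, floorCount N W n) : ℝ) / (Nat.factorial N : ℝ)) *
        ∏ n, ((residue N W n / ∑ j, residue N W j) ^
            (countLabel a n - floorCount N W n) *
          (Nat.factorial (countLabel a n) : ℝ) /
            (Nat.factorial (countLabel a n - floorCount N W n) : ℝ)))
  else 0

theorem residualLaw_singleton (hN : 0 < N) (hW : ∀ n, 0 ≤ W n) (hWsum : ∑ n, W n = 1)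
    (a : Fin N → Fin N) :
    residualLaw N W {a} = residualPMF N W a := by
  set F := ∑ n, floorCount N W n
  rw [residualLaw_eq_symmetrize, symmetrize_singleton, Fintype.card_fin]
  simp_rw [residualBase_singleton hN hW]
  rw [← ENNReal.ofReal_sum_of_nonneg fun σ _ =>
      prod_nonneg fun j _ => residualSlotWeight_nonneg hN hW j _,
    sum_comp_perm (fun b => ∏ j, residualSlotWeight N hN W j (b j)) a]
  simp only [residualSlotWeight]
  rw [sum_fiberCard_eq_prod_pinned (fun j : Fin N => (j : ℕ) < F)
      (fun j => stackLabel N hN (floorCount N W) j) (fun n => residue N W n / ∑ i, residue N W i),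
    fiberCard_stackLabel hN _ (sum_floorCount_le hW hWsum),
    sum_prod_of_add_fiberCard_eq (fun n => residue N W n / ∑ i, residue N W i),
    residualPMF, show countLabel a = fiberCard a from rfl]
  split_ifs with ha
  · have hC : (#{g : {j : Fin N // ¬ (j : ℕ) < F} → Fin N |
          fiberCard g = fiberCard a - floorCount N W} : ℝ) *
        ∏ n, ((fiberCard a n - floorCount N W n)! : ℝ) = (N - F)! := by
      exact_mod_cast card_residualTail_mul_prod_factorial hW hWsum a ha
    rw [nsmul_eq_mul, ← ENNReal.ofReal_natCast (N !),
      ← ENNReal.ofReal_inv_of_pos (by positivity), ← ENNReal.ofReal_mul (by positivity)]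
    congr 1
    rw [prod_div_distrib, prod_mul_distrib, ← hC]
    push_cast
    field_simp
  · simp

theorem residualLaw_apply_eval_eq (hN : 0 < N) (hW : ∀ n, 0 ≤ W n) (hWsum : ∑ n, W n = 1)
    (hR : 0 < ∑ n, residue N W n) (j n : Fin N) :
    residualLaw N W {v | v j = n} = ENNReal.ofReal (W n) := by
  refine (ENNReal.mul_right_inj (Nat.cast_ne_zero.2 hN.ne') (ENNReal.natCast_ne_top N)).1 ?_
  calc (N : ℝ≥0∞) * residualLaw N W {v | v j = n}
      = ∑ i, residualBase N W {v | v i = n} := by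
        simpa [residualLaw_eq_symmetrize] using
          card_mul_symmetrize_eval_preimage (residualBase N W) j (measurableSet_singleton n)
    _ = N * ENNReal.ofReal (W n) := by
        rw [sum_congr rfl fun i _ => residualBase_eval_preimage hN hW hR i n,
          ← ENNReal.ofReal_sum_of_nonneg fun i _ => residualSlotWeight_nonneg hN hW i n,
          sum_residualSlotWeight hN hW hWsum hR, ENNReal.ofReal_mul N.cast_nonneg,
          ENNReal.ofReal_natCast]

lemma residualPMF_comp_perm (π : Perm (Fin N)) (a : Fin N → Fin N) :
    residualPMF N (W ∘ π) a = residualPMF N W (π ∘ a) := by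
  have hχ : ∀ n, countLabel (π ∘ a) (π n) = countLabel a n := fiberCard_perm_comp π a
  have hr : ∑ n, residue N (W ∘ π) n = ∑ n, residue N W n := Equiv.sum_comp π (residue N W)
  have hf : ∑ n, floorCount N (W ∘ π) n = ∑ n, floorCount N W n :=
    Equiv.sum_comp π (floorCount N W)
  simp only [residualPMF, hr, hf]
  refine if_congr (Iff.trans ?_ π.forall_congr_right) ?_ rfl
  · simp only [hχ]
    rfl
  · conv_rhs => rw [← Equiv.prod_comp π]
    simp only [hχ]
    rfl

lemma map_perm_comp_residualLaw (hN : 0 < N) (hW : ∀ n, 0 ≤ W n) (hWsum : ∑ n, W n = 1)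
    (π : Perm (Fin N)) :
    (residualLaw N W).map (π ∘ ·) = residualLaw N (W ∘ π.symm) := by
  refine Measure.ext_of_singleton fun a => ?_
  have hpre : (π ∘ ·) ⁻¹' {a} = {π.symm ∘ a} := by
    ext v
    simp [Equiv.eq_symm_comp]
  rw [Measure.map_apply (measurable_of_countable _) (measurableSet_singleton a), hpre,
    residualLaw_singleton hN hW hWsum,
    residualLaw_singleton (W := W ∘ π.symm) hN (fun n => hW _)
      ((Equiv.sum_comp π.symm W).trans hWsum),
    residualPMF_comp_perm]

end Residual

end ResidualResampling

/-- Residual resampling followed by a uniformly random permutation: (a) its pmf is the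
stated multinomial-residual formula, and (b) it satisfies Assumption (R) (marginal
unbiasedness and cycle invariance). -/
theorem residual_resampling_pmf_and_assumption_R
    (N : ℕ) (hN : 0 < N) (W : Fin N → ℝ)
    (hWpos : ∀ n, 0 < W n) (hWsum : ∑ n, W n = 1)
    (hR : 0 < ∑ n, residue N W n) :
    (∀ a : Fin N → Fin N,
      residualLaw N W {a} =
        if ∀ n, floorCount N W n ≤ countLabel a n then
          ENNReal.ofReal
            (((Nat.factorial (N - ∑ n, floorCount N W n) : ℝ) / (Nat.factorial N : ℝ)) *
              ∏ n, ((residue N W n / ∑ j, residue N W j) ^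
                  (countLabel a n - floorCount N W n) *
                (Nat.factorial (countLabel a n) : ℝ) /
                  (Nat.factorial (countLabel a n - floorCount N W n) : ℝ)))
        else 0) ∧
    (∀ j n : Fin N, residualLaw N W {v | v j = n} = ENNReal.ofReal (W n)) ∧
    (∀ k : Fin N, (residualLaw N W).map (fun a => fun n => a (n + k)) = residualLaw N W) ∧
    (∀ k : Fin N, (residualLaw N W).map (fun a => fun n => a n - k) =
      residualLaw N fun n => W (n + k)) := by
  have hW : ∀ n, 0 ≤ W n := fun n => (hWpos n).le
  have : NeZero N := ⟨hN.ne'⟩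
  exact ⟨residualLaw_singleton hN hW hWsum,
    residualLaw_apply_eval_eq hN hW hWsum hR,
    fun k => map_comp_perm_symmetrize (residualBase N W) (Equiv.addRight k),
    fun k => map_perm_comp_residualLaw hN hW hWsum (Equiv.subRight k)⟩

end ParticleGibbs
end

section
/- Let W^1, …, W^N be strictly positive weights with ∑_{n=1}^N W^n = 1. Systematic resampling with cycle randomisation is defined as follows: draw U uniformly on [0,1]; set S(0) = 0 and S(m) = N ∑_{j=1}^m W^j; for each n ∈ {1,…,N}, let Ā^n be the unique label m such that S(m−1) ≤ U + (n−1) < S(m); then draw an N-cycle c uniformly at random among the N cycles of {1,…,N} and set A^{1:N} = Ā^{c(1:N)}. The resulting distribution of A^{1:N} satisfies Assumption (R): (Ra) it is marginally unbiased, i.e. P(A^n = m) = W^m for all m, n ∈ {1,…,N}; and (Rb) it is cycle-invariant. -/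
open MeasureTheory ProbabilityTheory Filter
open scoped ENNReal Topology

namespace ParticleGibbs

/-! ### Auxiliary material for `systematic_resampling_assumption_R` -/

section SysAux

variable {N : ℕ}

/-- The periodic label function underlying systematic resampling. -/
noncomputable def pl (hN : 0 < N) (W : Fin N → ℝ) (t : ℝ) : Fin N :=
  sysLabel N hN W (Int.fract (t / N) * N) ⟨0, hN⟩

lemma sysLabel_shift (hN : 0 < N) (W : Fin N → ℝ) (u : ℝ) (n : Fin N) :
    sysLabel N hN W u n = sysLabel N hN W (u + n) ⟨0, hN⟩ := by
  have h0 : ((⟨0, hN⟩ : Fin N) : ℝ) = 0 := by norm_num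
  simp only [sysLabel, h0, Nat.cast_zero, add_zero]

lemma pl_of_mem (hN : 0 < N) (W : Fin N → ℝ) (t : ℝ) (h0 : 0 ≤ t) (h1 : t < N) :
    pl hN W t = sysLabel N hN W t ⟨0, hN⟩ := by
  have hNne : (N : ℝ) ≠ 0 := Nat.cast_ne_zero.mpr hN.ne'
  have : Int.fract (t / N) = t / N := by
    rw [Int.fract_eq_self]
    constructor
    · positivity
    · rw [div_lt_one (by positivity)]; exact h1
  rw [pl, this, div_mul_cancel₀ _ hNne]

lemma pl_add_int (hN : 0 < N) (W : Fin N → ℝ) (t : ℝ) (m : ℤ) :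
    pl hN W (t + m * N) = pl hN W t := by
  have hNne : (N : ℝ) ≠ 0 := Nat.cast_ne_zero.mpr hN.ne'
  have : (t + m * N) / N = t / N + m := by field_simp
  rw [pl, this, Int.fract_add_intCast, pl]

lemma pl_add_nat (hN : 0 < N) (W : Fin N → ℝ) (t : ℝ) (m : ℕ) :
    pl hN W (t + m * N) = pl hN W t := by
  have := pl_add_int hN W t (m : ℤ)
  simpa using this

lemma pl_periodic (hN : 0 < N) (W : Fin N → ℝ) (t : ℝ) : pl hN W (t + N) = pl hN W t := by
  have := pl_add_int hN W t 1
  simpa using this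

lemma pl_coe_add (hN : 0 < N) (W : Fin N → ℝ) (u : ℝ) (n k : Fin N) :
    pl hN W (u + ((n + k : Fin N) : ℝ)) = pl hN W (u + (n : ℝ) + (k : ℝ)) := by
  have hq : (n : ℕ) + (k : ℕ) = ((n + k : Fin N) : ℕ) + N * (((n : ℕ) + (k : ℕ)) / N) := by
    rw [Fin.add_def]
    exact (Nat.mod_add_div _ _).symm
  have hq' : (((n : ℕ) : ℝ)) + ((k : ℕ) : ℝ) =
      (((n + k : Fin N) : ℕ) : ℝ) + ((((n : ℕ) + (k : ℕ)) / N : ℕ) : ℝ) * N := by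
    have := congrArg (fun x : ℕ => (x : ℝ)) hq
    push_cast at this
    linarith
  have h2 : u + ((n : ℕ) : ℝ) + ((k : ℕ) : ℝ) =
      (u + (((n + k : Fin N) : ℕ) : ℝ)) + ((((n : ℕ) + (k : ℕ)) / N : ℕ) : ℝ) * N := by
    linarith
  calc pl hN W (u + ((n + k : Fin N) : ℝ))
      = pl hN W ((u + (((n + k : Fin N) : ℕ) : ℝ)) +
          ((((n : ℕ) + (k : ℕ)) / N : ℕ) : ℝ) * N) := (pl_add_nat hN W _ _).symm
    _ = pl hN W (u + (n : ℝ) + (k : ℝ)) := by rw [← h2]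

lemma Iic_sum_le (W : Fin N → ℝ) (hWpos : ∀ n, 0 < W n) (hWsum : ∑ n, W n = 1) (m : Fin N) :
    ∑ j ∈ Finset.Iic m, W j ≤ 1 := by
  rw [← hWsum]
  exact Finset.sum_le_sum_of_subset_of_nonneg (Finset.subset_univ _)
    (fun i _ _ => (hWpos i).le)

lemma Iio_sum_le (W : Fin N → ℝ) (hWpos : ∀ n, 0 < W n) (hWsum : ∑ n, W n = 1) (m : Fin N) :
    ∑ j ∈ Finset.Iio m, W j ≤ 1 := by
  rw [← hWsum]
  exact Finset.sum_le_sum_of_subset_of_nonneg (Finset.subset_univ _)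
    (fun i _ _ => (hWpos i).le)

lemma Iio_sum_nonneg (W : Fin N → ℝ) (hWpos : ∀ n, 0 < W n) (m : Fin N) :
    0 ≤ ∑ j ∈ Finset.Iio m, W j :=
  Finset.sum_nonneg fun i _ => (hWpos i).le

lemma Iic_eq_Iio_sum (W : Fin N → ℝ) (m : Fin N) :
    ∑ j ∈ Finset.Iic m, W j = W m + ∑ j ∈ Finset.Iio m, W j := by
  rw [← Finset.Iio_insert, Finset.sum_insert (by simp)]

lemma sysLabel_zero_eq_iff (hN : 0 < N) (W : Fin N → ℝ)
    (hWpos : ∀ n, 0 < W n) (hWsum : ∑ n, W n = 1)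
    {t : ℝ} (h0 : 0 ≤ t) (h1 : t < N) (n : Fin N) :
    sysLabel N hN W t ⟨0, hN⟩ = n ↔
      (N : ℝ) * ∑ j ∈ Finset.Iio n, W j ≤ t ∧ t < (N : ℝ) * ∑ j ∈ Finset.Iic n, W j := by
  have h0c : ((⟨0, hN⟩ : Fin N) : ℝ) = 0 := by norm_num
  set filt := Finset.univ.filter fun m : Fin N =>
      t + ((⟨0, hN⟩ : Fin N) : ℝ) < (N : ℝ) * ∑ j ∈ Finset.Iic m, W j with hfilt
  have hmem : ∀ m : Fin N, m ∈ filt ↔ t < (N : ℝ) * ∑ j ∈ Finset.Iic m, W j := by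
    intro m
    simp [hfilt, h0c]
  have hlast : (⟨N - 1, by omega⟩ : Fin N) ∈ filt := by
    rw [hmem]
    have : Finset.Iic (⟨N - 1, by omega⟩ : Fin N) = Finset.univ := by
      apply Finset.eq_univ_iff_forall.mpr
      intro j
      rw [Finset.mem_Iic, Fin.le_def]
      have := j.isLt
      simp only []
      omega
    rw [this, hWsum, mul_one]
    exact h1
  have hne : filt.Nonempty := ⟨_, hlast⟩
  have hsys : sysLabel N hN W t ⟨0, hN⟩ = filt.min' hne := by
    rw [sysLabel, dif_pos]
  rw [hsys]
  constructor
  · intro h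
    subst h
    refine ⟨?_, (hmem _).mp (filt.min'_mem hne)⟩
    set n := filt.min' hne with hn
    by_cases hz : (n : ℕ) = 0
    · have : Finset.Iio n = ∅ := by
        apply Finset.eq_empty_iff_forall_notMem.mpr
        intro j hj
        rw [Finset.mem_Iio, Fin.lt_def, hz] at hj
        omega
      rw [this]
      simpa using h0
    · set n' : Fin N := ⟨(n : ℕ) - 1, by omega⟩ with hn'
      have hlt : n' < n := by rw [Fin.lt_def]; simp [hn']; omega
      have hnotmem : n' ∉ filt := by
        intro hmem'
        exact absurd (filt.min'_le _ hmem') (not_le.mpr hlt)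
      rw [hmem] at hnotmem
      push_neg at hnotmem
      have hIic : Finset.Iic n' = Finset.Iio n := by
        apply Finset.ext
        intro j
        rw [Finset.mem_Iic, Finset.mem_Iio, Fin.le_def, Fin.lt_def]
        simp only [hn']
        omega
      rwa [hIic] at hnotmem
  · rintro ⟨hlow, hupp⟩
    have hnf : n ∈ filt := (hmem n).mpr hupp
    have h₁ : filt.min' hne ≤ n := filt.min'_le _ hnf
    rcases lt_or_eq_of_le h₁ with h₂ | h₂
    · exfalso
      have hmemmin := (hmem _).mp (filt.min'_mem hne)
      have hsub : Finset.Iic (filt.min' hne) ⊆ Finset.Iio n := by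
        intro j hj
        rw [Finset.mem_Iic] at hj
        rw [Finset.mem_Iio]
        exact lt_of_le_of_lt hj h₂
      have : (N : ℝ) * ∑ j ∈ Finset.Iic (filt.min' hne), W j ≤
          (N : ℝ) * ∑ j ∈ Finset.Iio n, W j := by
        apply mul_le_mul_of_nonneg_left _ (by positivity)
        exact Finset.sum_le_sum_of_subset_of_nonneg hsub (fun i _ _ => (hWpos i).le)
      linarith
    · exact h₂

lemma measurable_sysLabel_zero (hN : 0 < N) (W : Fin N → ℝ) :
    Measurable (fun u => sysLabel N hN W u ⟨0, hN⟩) := by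
  classical
  have h0c : ((⟨0, hN⟩ : Fin N) : ℝ) = 0 := by norm_num
  set c : Fin N → ℝ := fun m => (N : ℝ) * ∑ j ∈ Finset.Iic m, W j with hc
  set dval : Finset (Fin N) → Fin N :=
    fun s => if h : s.Nonempty then s.min' h else ⟨0, hN⟩ with hdval
  set filt : ℝ → Finset (Fin N) :=
    fun u => Finset.univ.filter fun m : Fin N => u < c m with hfiltd
  have key : ∀ u, sysLabel N hN W u ⟨0, hN⟩ = dval (filt u) := by
    intro u
    simp only [sysLabel, h0c, Nat.cast_zero, add_zero, hdval, hfiltd, hc]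
  apply measurable_to_countable'
  intro m
  have hset : (fun u => sysLabel N hN W u ⟨0, hN⟩) ⁻¹' {m} =
      ⋃ (s : Finset (Fin N)) (_ : dval s = m), {u | filt u = s} := by
    ext u
    simp only [Set.mem_preimage, Set.mem_singleton_iff, Set.mem_iUnion, key]
    constructor
    · intro h; exact ⟨filt u, h, rfl⟩
    · rintro ⟨s, h1, h2⟩; rw [h2]; exact h1
  rw [hset]
  apply MeasurableSet.iUnion
  intro s
  apply MeasurableSet.iUnion
  intro _
  have hseteq : {u : ℝ | filt u = s} = ⋂ m' : Fin N,
      (if m' ∈ s then Set.Iio (c m') else Set.Ici (c m')) := by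
    ext u
    simp only [Set.mem_iInter]
    constructor
    · intro h m'
      split_ifs with hm'
      · rw [← h, hfiltd] at hm'
        simp only [Finset.mem_filter, Finset.mem_univ, true_and] at hm'
        exact hm'
      · rw [Set.mem_Ici, ← not_lt]
        intro hcon
        apply hm'
        rw [← h, hfiltd]
        simp only [Finset.mem_filter, Finset.mem_univ, true_and]
        exact hcon
    · intro h
      apply Finset.ext
      intro m'
      have hm := h m'
      rw [hfiltd]
      simp only [Finset.mem_filter, Finset.mem_univ, true_and]
      split_ifs at hm with hm'
      · simp only [hm', iff_true]
        exact hm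
      · simp only [Set.mem_Ici] at hm
        constructor
        · intro hcon; linarith
        · intro hcon; exact absurd hcon hm'
  rw [hseteq]
  apply MeasurableSet.iInter
  intro m'
  split_ifs
  · exact measurableSet_Iio
  · exact measurableSet_Ici

lemma measurable_pl (hN : 0 < N) (W : Fin N → ℝ) : Measurable (pl hN W) := by
  have h1 : Measurable (fun t : ℝ => Int.fract (t / N) * N) :=
    (measurable_fract.comp (measurable_id.div_const _)).mul_const _
  exact (measurable_sysLabel_zero hN W).comp h1

lemma map_finset_sum {α β ι : Type*} [MeasurableSpace α] [MeasurableSpace β] {f : α → β}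
    (hf : Measurable f) (s : Finset ι) (μ : ι → Measure α) :
    (∑ i ∈ s, μ i).map f = ∑ i ∈ s, (μ i).map f := by
  classical
  induction s using Finset.cons_induction with
  | empty => simp
  | cons i s hi ih =>
      rw [Finset.sum_cons, Finset.sum_cons, Measure.map_add _ _ hf, ih]

lemma map_volume_restrict_add {α : Type*} [MeasurableSpace α] {f : ℝ → α} (hf : Measurable f)
    (a b c : ℝ) :
    (volume.restrict (Set.Ico a b)).map (fun t => f (t + c)) =
      (volume.restrict (Set.Ico (a + c) (b + c))).map f := by
  have hmm : Measurable (fun t : ℝ => t + c) := measurable_add_const c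
  have h1 : (fun t => f (t + c)) = f ∘ (fun t : ℝ => t + c) := rfl
  rw [h1, ← Measure.map_map hf hmm]
  congr 1
  have hpre : (fun t : ℝ => t + c) ⁻¹' Set.Ico (a + c) (b + c) = Set.Ico a b := by
    ext t
    simp only [Set.mem_preimage, Set.mem_Ico]
    constructor <;> rintro ⟨h1, h2⟩ <;> constructor <;> linarith
  calc Measure.map (fun t : ℝ => t + c) (volume.restrict (Set.Ico a b))
      = Measure.map (fun t : ℝ => t + c)
          (volume.restrict ((fun t : ℝ => t + c) ⁻¹' Set.Ico (a + c) (b + c))) := by rw [hpre]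
    _ = (Measure.map (fun t : ℝ => t + c) volume).restrict (Set.Ico (a + c) (b + c)) :=
        (Measure.restrict_map hmm measurableSet_Ico).symm
    _ = volume.restrict (Set.Ico (a + c) (b + c)) := by
        rw [map_add_right_eq_self volume c]

lemma map_restrict_shift_periodic {α : Type*} [MeasurableSpace α] {f : ℝ → α}
    (hf : Measurable f) {T c : ℝ} (hc : 0 ≤ c) (hcT : c ≤ T)
    (hper : ∀ t, f (t + T) = f t) :
    (volume.restrict (Set.Ico 0 T)).map (fun t => f (t + c)) =
      (volume.restrict (Set.Ico 0 T)).map f := by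
  rw [map_volume_restrict_add hf, zero_add]
  have hsplit : volume.restrict (Set.Ico c (T + c)) =
      volume.restrict (Set.Ico c T) + volume.restrict (Set.Ico T (T + c)) := by
    rw [← Measure.restrict_union (Set.Ico_disjoint_Ico_same) measurableSet_Ico,
      Set.Ico_union_Ico_eq_Ico hcT (by linarith)]
  have hmid : (volume.restrict (Set.Ico T (T + c))).map f =
      (volume.restrict (Set.Ico 0 c)).map f := by
    have := map_volume_restrict_add hf 0 c T
    rw [zero_add, add_comm c T] at this
    rw [← this]
    exact Measure.map_congr (Filter.Eventually.of_forall fun t => hper t)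
  have hsplit2 : volume.restrict (Set.Ico (0:ℝ) T) =
      volume.restrict (Set.Ico (0:ℝ) c) + volume.restrict (Set.Ico c T) := by
    rw [← Measure.restrict_union (Set.Ico_disjoint_Ico_same) measurableSet_Ico,
      Set.Ico_union_Ico_eq_Ico hc hcT]
  rw [hsplit, Measure.map_add _ _ hf, hmid, hsplit2, Measure.map_add _ _ hf, add_comm]

lemma restrict_Ico_eq_sum (N : ℕ) :
    volume.restrict (Set.Ico (0:ℝ) N) =
      ∑ k : Fin N, volume.restrict (Set.Ico (k : ℝ) ((k : ℝ) + 1)) := by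
  have hU : Set.Ico (0:ℝ) N = ⋃ k : Fin N, Set.Ico (k : ℝ) ((k : ℝ) + 1) := by
    ext t
    simp only [Set.mem_Ico, Set.mem_iUnion]
    constructor
    · rintro ⟨h0, h1⟩
      have hfl : (⌊t⌋₊ : ℝ) ≤ t := Nat.floor_le h0
      have hlt : ⌊t⌋₊ < N := by
        by_contra hcon
        push_neg at hcon
        have : (N : ℝ) ≤ (⌊t⌋₊ : ℝ) := by exact_mod_cast hcon
        linarith
      exact ⟨⟨⌊t⌋₊, hlt⟩, hfl, Nat.lt_floor_add_one t⟩
    · rintro ⟨k, hk1, hk2⟩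
      have hkN : (k : ℕ) + 1 ≤ N := k.isLt
      have hkNr : ((k : ℕ) : ℝ) + 1 ≤ N := by exact_mod_cast hkN
      constructor
      · have : (0:ℝ) ≤ (k : ℕ) := Nat.cast_nonneg _
        linarith
      · linarith
  rw [hU, Measure.restrict_iUnion _ (fun k => measurableSet_Ico), Measure.sum_fintype]
  intro k k' hkk'
  have hne : (k : ℕ) ≠ (k' : ℕ) := fun h => hkk' (Fin.ext h)
  simp only [Function.onFun]
  rw [Set.disjoint_left]
  rintro t ⟨h1, h2⟩ ⟨h3, h4⟩
  rcases hne.lt_or_gt with h | h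
  · have : ((k : ℕ) : ℝ) + 1 ≤ ((k' : ℕ) : ℝ) := by exact_mod_cast h
    linarith
  · have : ((k' : ℕ) : ℝ) + 1 ≤ ((k : ℕ) : ℝ) := by exact_mod_cast h
    linarith

lemma fin_sub_val (i k : Fin N) :
    ((i - k : Fin N) : ℕ) =
      if (k : ℕ) ≤ (i : ℕ) then (i : ℕ) - (k : ℕ) else (i : ℕ) + (N - (k : ℕ)) := by
  have hi := i.isLt
  have hk := k.isLt
  rw [Fin.sub_def]
  simp only
  split_ifs with h
  · have h2 : N - (k : ℕ) + (i : ℕ) = N + ((i : ℕ) - (k : ℕ)) := by omega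
    rw [h2, Nat.add_mod_left]
    exact Nat.mod_eq_of_lt (by omega)
  · rw [Nat.mod_eq_of_lt (by omega)]
    omega

lemma fin_add_val_low {n k : Fin N} (h : (n : ℕ) + (k : ℕ) < N) :
    ((n + k : Fin N) : ℕ) = (n : ℕ) + (k : ℕ) := by
  rw [Fin.add_def]
  exact Nat.mod_eq_of_lt h

lemma fin_add_val_high {n k : Fin N} (h : N ≤ (n : ℕ) + (k : ℕ)) :
    ((n + k : Fin N) : ℕ) = (n : ℕ) + (k : ℕ) - N := by
  have hn := n.isLt
  have hk := k.isLt
  rw [Fin.add_def]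
  simp only
  rw [Nat.mod_eq_sub_mod h]
  exact Nat.mod_eq_of_lt (by omega)

lemma sum_Iio_indicator (W : Fin N → ℝ) (n : Fin N) :
    ∑ j ∈ Finset.Iio n, W j = ∑ i : Fin N, if i < n then W i else 0 := by
  have : Finset.Iio n = Finset.univ.filter (fun j => j < n) := by
    ext j; simp
  rw [this, Finset.sum_filter]

lemma shifted_sum_indicator (W : Fin N → ℝ) (hN : 0 < N) (n k : Fin N) :
    ∑ j ∈ Finset.Iio n, W (j + k) = ∑ i : Fin N, if i - k < n then W i else 0 := by
  haveI : NeZero N := ⟨hN.ne'⟩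
  rw [sum_Iio_indicator]
  refine (Fintype.sum_equiv (Equiv.subRight k)
    (fun i => if i - k < n then W i else 0)
    (fun j => if j < n then W (j + k) else 0) ?_).symm
  intro i
  simp only [Equiv.subRight_apply]
  by_cases h : i - k < n
  · rw [if_pos h, if_pos h, sub_add_cancel]
  · rw [if_neg h, if_neg h]

lemma shifted_sum_low (W : Fin N → ℝ) (hN : 0 < N) {n k : Fin N}
    (h : (n : ℕ) + (k : ℕ) < N) :
    ∑ j ∈ Finset.Iio n, W (j + k) =
      ∑ j ∈ Finset.Iio (n + k), W j - ∑ j ∈ Finset.Iio k, W j := by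
  rw [shifted_sum_indicator W hN, sum_Iio_indicator, sum_Iio_indicator,
    ← Finset.sum_sub_distrib]
  apply Finset.sum_congr rfl
  intro i _
  have hi := i.isLt
  have hs := fin_sub_val i k
  have ha := fin_add_val_low h
  have hmod : ((n : ℕ) + (k : ℕ)) % N = (n : ℕ) + (k : ℕ) := Nat.mod_eq_of_lt h
  simp only [Fin.lt_def, hs, ha]
  rcases le_or_gt (k : ℕ) (i : ℕ) with hik | hik
  · rw [if_pos hik]
    split_ifs <;> first | ring1 | (exfalso; omega)
  · rw [if_neg (not_le.mpr hik)]
    split_ifs <;> first | ring1 | (exfalso; omega)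

lemma shifted_sum_high (W : Fin N → ℝ) (hN : 0 < N) (hWsum : ∑ n, W n = 1) {n k : Fin N}
    (h : N ≤ (n : ℕ) + (k : ℕ)) :
    ∑ j ∈ Finset.Iio n, W (j + k) =
      (1 - ∑ j ∈ Finset.Iio k, W j) + ∑ j ∈ Finset.Iio (n + k), W j := by
  have hn := n.isLt
  have hk := k.isLt
  rw [shifted_sum_indicator W hN, sum_Iio_indicator, sum_Iio_indicator, ← hWsum,
    ← Finset.sum_sub_distrib, ← Finset.sum_add_distrib]
  apply Finset.sum_congr rfl
  intro i _
  have hi := i.isLt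
  have hs := fin_sub_val i k
  have ha := fin_add_val_high h
  have hmod : ((n : ℕ) + (k : ℕ)) % N = (n : ℕ) + (k : ℕ) - N := by
    rw [Nat.mod_eq_sub_mod h]
    exact Nat.mod_eq_of_lt (by omega)
  simp only [Fin.lt_def, hs, ha]
  rcases le_or_gt (k : ℕ) (i : ℕ) with hik | hik
  · rw [if_pos hik]
    split_ifs <;> first | ring1 | (exfalso; omega)
  · rw [if_neg (not_le.mpr hik)]
    split_ifs <;> first | ring1 | (exfalso; omega)

lemma pl_shift_weights (hN : 0 < N) (W : Fin N → ℝ)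
    (hWpos : ∀ n, 0 < W n) (hWsum : ∑ n, W n = 1) (k : Fin N) (t : ℝ) :
    pl hN (fun n => W (n + k)) t =
      pl hN W (t + (N : ℝ) * ∑ j ∈ Finset.Iio k, W j) - k := by
  haveI : NeZero N := ⟨hN.ne'⟩
  set W' : Fin N → ℝ := fun n => W (n + k) with hW'
  have hW'pos : ∀ n, 0 < W' n := fun n => hWpos _
  have hW'sum : ∑ n, W' n = 1 := by
    rw [← hWsum]
    exact Fintype.sum_equiv (Equiv.addRight k) _ _ (fun n => rfl)
  set d : ℝ := ∑ j ∈ Finset.Iio k, W j with hd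
  set D : ℝ := (N : ℝ) * d with hD
  have hd0 : 0 ≤ d := Iio_sum_nonneg W hWpos k
  have hNpos : (0:ℝ) < N := by exact_mod_cast hN
  -- main case : t ∈ [0, N)
  have main : ∀ t : ℝ, 0 ≤ t → t < N → pl hN W' t = pl hN W (t + D) - k := by
    intro t h0 h1
    set n : Fin N := pl hN W' t with hn
    have hchar : (N : ℝ) * ∑ j ∈ Finset.Iio n, W' j ≤ t ∧
        t < (N : ℝ) * ∑ j ∈ Finset.Iic n, W' j := by
      rw [← sysLabel_zero_eq_iff hN W' hW'pos hW'sum h0 h1 n]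
      rw [hn, pl_of_mem hN W' t h0 h1]
    set m : Fin N := n + k with hm
    have hWm : W' n = W m := rfl
    have hIicn : ∑ j ∈ Finset.Iic n, W' j = W m + ∑ j ∈ Finset.Iio n, W' j := by
      rw [Iic_eq_Iio_sum W' n, hWm]
    have hIicm : ∑ j ∈ Finset.Iic m, W j = W m + ∑ j ∈ Finset.Iio m, W j :=
      Iic_eq_Iio_sum W m
    have hmk : m - k = n := by
      rw [hm]
      exact add_sub_cancel_right n k
    have hIicmle : ∑ j ∈ Finset.Iic m, W j ≤ 1 := Iic_sum_le W hWpos hWsum m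
    have hIiomnn : 0 ≤ ∑ j ∈ Finset.Iio m, W j := Iio_sum_nonneg W hWpos m
    rcases lt_or_ge ((n : ℕ) + (k : ℕ)) N with hcase | hcase
    · have hlow : ∑ j ∈ Finset.Iio n, W' j =
          ∑ j ∈ Finset.Iio m, W j - d := shifted_sum_low W hN hcase
      have hb1 : (N : ℝ) * ∑ j ∈ Finset.Iio m, W j ≤ t + D := by
        have := hchar.1
        rw [hlow] at this
        rw [hD]
        nlinarith
      have hb2 : t + D < (N : ℝ) * ∑ j ∈ Finset.Iic m, W j := by
        have := hchar.2
        rw [hIicn, hlow] at this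
        rw [hIicm, hD]
        nlinarith
      have h0' : 0 ≤ t + D := le_trans (mul_nonneg hNpos.le hIiomnn) hb1
      have h1' : t + D < N := lt_of_lt_of_le hb2 (by nlinarith)
      have : pl hN W (t + D) = m := by
        rw [pl_of_mem hN W _ h0' h1']
        rw [sysLabel_zero_eq_iff hN W hWpos hWsum h0' h1' m]
        exact ⟨hb1, hb2⟩
      rw [this, hmk]
    · have hhigh : ∑ j ∈ Finset.Iio n, W' j =
          (1 - d) + ∑ j ∈ Finset.Iio m, W j := shifted_sum_high W hN hWsum hcase
      have hb1 : (N : ℝ) * ∑ j ∈ Finset.Iio m, W j ≤ t + D - N := by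
        have := hchar.1
        rw [hhigh] at this
        rw [hD]
        nlinarith
      have hb2 : t + D - N < (N : ℝ) * ∑ j ∈ Finset.Iic m, W j := by
        have := hchar.2
        rw [hIicn, hhigh] at this
        rw [hIicm, hD]
        nlinarith
      have h0' : 0 ≤ t + D - N := le_trans (mul_nonneg hNpos.le hIiomnn) hb1
      have h1' : t + D - N < N := lt_of_lt_of_le hb2 (by nlinarith)
      have hsplit : t + D = (t + D - N) + (N : ℝ) := by ring
      have : pl hN W (t + D) = m := by
        rw [hsplit, pl_periodic hN W]
        rw [pl_of_mem hN W _ h0' h1']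
        rw [sysLabel_zero_eq_iff hN W hWpos hWsum h0' h1' m]
        exact ⟨hb1, hb2⟩
      rw [this, hmk]
  -- reduction to [0, N)
  have hNne : (N : ℝ) ≠ 0 := hNpos.ne'
  set t₀ : ℝ := Int.fract (t / N) * N with ht₀
  have h00 : 0 ≤ t₀ := by
    rw [ht₀]
    have := Int.fract_nonneg (t / N)
    positivity
  have h01 : t₀ < N := by
    rw [ht₀]
    have := Int.fract_lt_one (t / N)
    nlinarith
  have hteq : t = t₀ + (⌊t / N⌋ : ℝ) * N := by
    rw [ht₀, Int.fract]
    field_simp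
    ring
  have e1 : pl hN W' t = pl hN W' t₀ := by
    conv_lhs => rw [hteq]
    exact pl_add_int hN W' t₀ ⌊t / N⌋
  have e2 : pl hN W (t + D) = pl hN W (t₀ + D) := by
    have : t + D = (t₀ + D) + (⌊t / N⌋ : ℝ) * N := by linarith [hteq]
    rw [this]
    exact pl_add_int hN W (t₀ + D) ⌊t / N⌋
  rw [e1, e2]
  exact main t₀ h00 h01

lemma systematicLaw_eq (hN : 0 < N) (W : Fin N → ℝ)
    (hWpos : ∀ n, 0 < W n) (hWsum : ∑ n, W n = 1) :
    systematicLaw N W = (N : ℝ≥0∞)⁻¹ •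
      (volume.restrict (Set.Ico (0:ℝ) (N:ℝ))).map
        (fun t => fun n : Fin N => pl hN W (t + n)) := by
  have hF : Measurable (fun t => fun n : Fin N => pl hN W (t + n)) :=
    measurable_pi_lambda _ fun n => (measurable_pl hN W).comp (measurable_add_const _)
  rw [systematicLaw, dif_pos hN]
  congr 1
  rw [restrict_Ico_eq_sum N, map_finset_sum hF]
  apply Finset.sum_congr rfl
  intro k _
  have step1 : Measure.map (fun u => fun n : Fin N => sysLabel N hN W u (n + k))
      (volume.restrict (Set.Ico (0:ℝ) 1)) =
      Measure.map (fun u => (fun t => fun n : Fin N => pl hN W (t + n)) (u + (k : ℝ)))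
        (volume.restrict (Set.Ico (0:ℝ) 1)) := by
    apply Measure.map_congr
    filter_upwards [ae_restrict_mem measurableSet_Ico] with u hu
    funext n
    have hu0 : (0:ℝ) ≤ u := hu.1
    have hu1 : u < 1 := hu.2
    have hv : (0:ℝ) ≤ u + ((n + k : Fin N) : ℝ) := by positivity
    have hv1 : u + ((n + k : Fin N) : ℝ) < N := by
      have h1 : ((n + k : Fin N) : ℕ) < N := (n + k).isLt
      have h2 : (((n + k : Fin N) : ℕ) : ℝ) + 1 ≤ N := by exact_mod_cast h1
      have : (((n + k : Fin N) : ℕ) : ℝ) = ((n + k : Fin N) : ℝ) := rfl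
      linarith [this ▸ h2]
    show sysLabel N hN W u (n + k) = pl hN W (u + (k : ℝ) + (n : ℝ))
    rw [sysLabel_shift, ← pl_of_mem hN W _ hv hv1, pl_coe_add]
    congr 1
    ring
  rw [step1, map_volume_restrict_add hF 0 1 (k : ℝ), zero_add, add_comm 1 (k:ℝ)]

end SysAux

end ParticleGibbs

namespace ParticleGibbs

variable {𝒳 : Type*} [MetricSpace 𝒳] [CompleteSpace 𝒳] [TopologicalSpace.SeparableSpace 𝒳]
  [MeasurableSpace 𝒳] [BorelSpace 𝒳]

/-- Systematic resampling with cycle randomisation satisfies Assumption (R): it is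
marginally unbiased, invariant under cycling of a sample, and compatible with cyclic
relabelling of the weights. -/
theorem systematic_resampling_assumption_R
    (N : ℕ) (hN : 0 < N) (W : Fin N → ℝ)
    (hWpos : ∀ n, 0 < W n) (hWsum : ∑ n, W n = 1) :
    (∀ j n : Fin N, systematicLaw N W {v | v j = n} = ENNReal.ofReal (W n)) ∧
    (∀ k : Fin N,
      (systematicLaw N W).map (fun a => fun n => a (n + k)) = systematicLaw N W) ∧
    (∀ k : Fin N, (systematicLaw N W).map (fun a => fun n => a n - k) =
      systematicLaw N fun n => W (n + k)) := by
  haveI : NeZero N := ⟨hN.ne'⟩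
  have hNpos : (0:ℝ) < N := by exact_mod_cast hN
  have hNe0 : (N : ℝ≥0∞) ≠ 0 := by
    simp [hN.ne']
  have hNetop : (N : ℝ≥0∞) ≠ ⊤ := ENNReal.natCast_ne_top N
  have hF : Measurable (fun t => fun n : Fin N => pl hN W (t + n)) :=
    measurable_pi_lambda _ fun n => (measurable_pl hN W).comp (measurable_add_const _)
  have hperF : ∀ t : ℝ, (fun n : Fin N => pl hN W (t + (N:ℝ) + n)) =
      fun n : Fin N => pl hN W (t + n) := by
    intro t
    funext n
    have : t + (N:ℝ) + (n:ℝ) = (t + n) + (N:ℝ) := by ring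
    rw [this, pl_periodic hN W]
  refine ⟨?_, ?_, ?_⟩
  · -- (Ra) marginal unbiasedness
    intro j n
    have hV : MeasurableSet {v : Fin N → Fin N | v j = n} :=
      (Set.to_countable _).measurableSet
    rw [systematicLaw_eq hN W hWpos hWsum, Measure.smul_apply,
      Measure.map_apply hF hV]
    have hpre : (fun t => fun n' : Fin N => pl hN W (t + n')) ⁻¹' {v | v j = n} =
        (fun t => pl hN W (t + (j : ℝ))) ⁻¹' {n} := rfl
    have hm : Measurable (fun t : ℝ => pl hN W (t + (j : ℝ))) :=
      (measurable_pl hN W).comp (measurable_add_const _)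
    rw [hpre, ← Measure.map_apply hm (measurableSet_singleton n)]
    have hj0 : (0:ℝ) ≤ (j : ℝ) := by positivity
    have hjN : ((j : ℕ) : ℝ) ≤ (N : ℝ) := by
      have := j.isLt
      exact_mod_cast this.le
    rw [map_restrict_shift_periodic (measurable_pl hN W) hj0 hjN
      (fun t => pl_periodic hN W t)]
    rw [Measure.map_apply (measurable_pl hN W) (measurableSet_singleton n),
      Measure.restrict_apply (measurable_pl hN W (measurableSet_singleton n))]
    have hseteq : pl hN W ⁻¹' {n} ∩ Set.Ico (0:ℝ) (N:ℝ) =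
        Set.Ico ((N : ℝ) * ∑ i ∈ Finset.Iio n, W i) ((N : ℝ) * ∑ i ∈ Finset.Iic n, W i) := by
      ext t
      simp only [Set.mem_inter_iff, Set.mem_preimage, Set.mem_singleton_iff, Set.mem_Ico]
      constructor
      · rintro ⟨hpl, h0, h1⟩
        rw [pl_of_mem hN W t h0 h1, sysLabel_zero_eq_iff hN W hWpos hWsum h0 h1 n] at hpl
        exact hpl
      · rintro ⟨h0, h1⟩
        have ht0 : (0:ℝ) ≤ t :=
          le_trans (mul_nonneg hNpos.le (Iio_sum_nonneg W hWpos n)) h0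
        have ht1 : t < N := by
          have := Iic_sum_le W hWpos hWsum n
          nlinarith
        refine ⟨?_, ht0, ht1⟩
        rw [pl_of_mem hN W t ht0 ht1, sysLabel_zero_eq_iff hN W hWpos hWsum ht0 ht1 n]
        exact ⟨h0, h1⟩
    rw [hseteq, Real.volume_Ico]
    have hdiff : (N : ℝ) * ∑ i ∈ Finset.Iic n, W i - (N : ℝ) * ∑ i ∈ Finset.Iio n, W i =
        (N : ℝ) * W n := by
      rw [Iic_eq_Iio_sum W n]
      ring
    rw [hdiff, ENNReal.ofReal_mul (le_of_lt hNpos), ENNReal.ofReal_natCast,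
      smul_eq_mul, ← mul_assoc, ENNReal.inv_mul_cancel hNe0 hNetop, one_mul]
  · -- (Rb) first part : cycling the sample
    intro k
    have hg : Measurable (fun a : Fin N → Fin N => fun n => a (n + k)) :=
      measurable_of_countable _
    rw [systematicLaw_eq hN W hWpos hWsum, Measure.map_smul]
    congr 1
    rw [Measure.map_map hg hF]
    have hcomp : ((fun a : Fin N → Fin N => fun n => a (n + k)) ∘
        (fun t => fun n : Fin N => pl hN W (t + n))) =
        fun t => (fun t' => fun n : Fin N => pl hN W (t' + n)) (t + (k : ℝ)) := by
      funext t
      funext n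
      show pl hN W (t + ((n + k : Fin N) : ℝ)) = pl hN W (t + (k : ℝ) + (n : ℝ))
      rw [pl_coe_add hN W]
      congr 1
      ring
    rw [hcomp]
    have hk0 : (0:ℝ) ≤ (k : ℝ) := by positivity
    have hkN : ((k : ℕ) : ℝ) ≤ (N : ℝ) := by
      have := k.isLt
      exact_mod_cast this.le
    exact map_restrict_shift_periodic hF hk0 hkN hperF
  · -- (Rb) second part : cycling the weights
    intro k
    set W' : Fin N → ℝ := fun n => W (n + k) with hW'
    have hW'pos : ∀ n, 0 < W' n := fun n => hWpos _
    have hW'sum : ∑ n, W' n = 1 := by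
      rw [← hWsum]
      exact Fintype.sum_equiv (Equiv.addRight k) _ _ (fun n => rfl)
    have hg : Measurable (fun a : Fin N → Fin N => fun n => a n - k) :=
      measurable_of_countable _
    rw [systematicLaw_eq hN W hWpos hWsum, systematicLaw_eq hN W' hW'pos hW'sum,
      Measure.map_smul]
    congr 1
    rw [Measure.map_map hg hF]
    set D : ℝ := (N : ℝ) * ∑ j ∈ Finset.Iio k, W j with hD
    have hD0 : 0 ≤ D := by
      have := Iio_sum_nonneg W hWpos k
      positivity
    have hDN : D ≤ (N : ℝ) := by
      have := Iio_sum_le W hWpos hWsum k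
      nlinarith
    have hgF : Measurable ((fun a : Fin N → Fin N => fun n => a n - k) ∘
        (fun t => fun n : Fin N => pl hN W (t + n))) := hg.comp hF
    have hperGF : ∀ t : ℝ, ((fun a : Fin N → Fin N => fun n => a n - k) ∘
        (fun t => fun n : Fin N => pl hN W (t + n))) (t + (N:ℝ)) =
        ((fun a : Fin N → Fin N => fun n => a n - k) ∘
        (fun t => fun n : Fin N => pl hN W (t + n))) t := by
      intro t
      simp only [Function.comp_apply]
      funext n
      have : t + (N:ℝ) + (n:ℝ) = (t + n) + (N:ℝ) := by ring
      rw [this, pl_periodic hN W]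
    have hFW' : (fun t => fun n : Fin N => pl hN W' (t + n)) =
        fun t => ((fun a : Fin N → Fin N => fun n => a n - k) ∘
          (fun t' => fun n : Fin N => pl hN W (t' + n))) (t + D) := by
      funext t
      funext n
      show pl hN W' (t + (n : ℝ)) = pl hN W (t + D + (n : ℝ)) - k
      rw [hW', pl_shift_weights hN W hWpos hWsum k (t + (n : ℝ))]
      rw [← hD]
      congr 2
      ring
    rw [hFW', map_restrict_shift_periodic hgF hD0 hDN hperGF]


end ParticleGibbs
end
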